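/- arXiv:2509.22376 — 8 statements merged into one kernel-verified Lean document; each statement's English description precedes it below -/
import Mathlib

section
/- Let Y be a finite-dimensional subspace of ℓ∞ (bounded real sequences) such that the quotient map π : ℓ∞ → ℓ∞/c₀ restricted to Y is an isomorphism onto its image X. Then for every ε > 0 there exists N ∈ ℕ such that for all n > N, the map sending y ∈ Y to π(y), viewed as a map on the space Y_{[n,∞)} = {y·1_{[n,∞)} : y ∈ Y}, is an isomorphism onto X bounded below by 1 − ε; that is, for every y ∈ Y, ‖π(y)‖ ≥ (1 − ε)·‖y·1_{[n,∞)}‖_∞. -/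
/-!
For fixed `y`, `‖y_{[n,∞)}‖` decreases to `‖π(y)‖`. These are continuous functions of `y`, so by
Dini's theorem the convergence is uniform on the compact unit ball of the finite-dimensional `Y`,
and by homogeneity `‖y_{[n,∞)}‖ ≤ ‖π(y)‖ + δ‖y‖` on `Y` for large `n`. As `c₀` is closed, the
injective map `π` is bounded below on `Y`, `‖y‖ ≤ K‖π(y)‖`; with `δ = ε/K` this gives
`‖y_{[n,∞)}‖ ≤ (1 + ε)‖π(y)‖`, and `(1 - ε)(1 + ε) ≤ 1`.
-/

set_option synthInstance.maxHeartbeats 400000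
set_option maxHeartbeats 1000000

noncomputable section

open Set Filter
open scoped ENNReal

/-- The Banach space `ℓ∞` of bounded real sequences with the sup norm. -/
abbrev Linf : Type := ↥(lp (fun _ : ℕ => ℝ) ∞)

/-- For `y ∈ ℓ∞` and `A ⊆ ℕ`, the truncation `y_A`, equal to `y` on `A` and `0` elsewhere. -/
def truncSeq (A : Set ℕ) (y : Linf) : Linf :=
  ⟨fun i => A.indicator (⇑y) i, memℓp_infty ⟨‖y‖, by
    rintro x ⟨i, rfl⟩
    by_cases h : i ∈ A
    · simpa [Set.indicator_of_mem h] using lp.norm_apply_le_norm ENNReal.top_ne_zero y i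
    · simp [Set.indicator_of_notMem h]⟩⟩

/-- The closed subspace `c₀ ⊆ ℓ∞` of sequences converging to `0`. -/
def c0 : Submodule ℝ Linf where
  carrier := {f | Tendsto (fun n => f n) atTop (nhds 0)}
  add_mem' := by
    intro f g hf hg
    have := hf.add hg
    simpa [lp.coeFn_add] using this
  zero_mem' := by
    simpa [lp.coeFn_zero] using
      (tendsto_const_nhds : Tendsto (fun _ : ℕ => (0 : ℝ)) atTop (nhds 0))
  smul_mem' := by
    intro c f hf
    have := hf.const_smul c
    simpa [lp.coeFn_smul] using this

/-- The quotient map `π : ℓ∞ → ℓ∞/c₀`. -/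
def quotMap : Linf →ₗ[ℝ] Linf ⧸ c0 := c0.mkQ

open Topology

lemma truncSeq_apply (A : Set ℕ) (y : Linf) (i : ℕ) : truncSeq A y i = A.indicator (⇑y) i := rfl

lemma truncSeq_apply_of_mem {A : Set ℕ} (y : Linf) {i : ℕ} (hi : i ∈ A) : truncSeq A y i = y i :=
  Set.indicator_of_mem hi _

lemma norm_truncSeq_le_of_forall_le (A : Set ℕ) (y : Linf) {C : ℝ} (hC : 0 ≤ C)
    (h : ∀ i ∈ A, ‖y i‖ ≤ C) : ‖truncSeq A y‖ ≤ C := by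
  refine lp.norm_le_of_forall_le hC fun i => ?_
  by_cases hi : i ∈ A
  · simpa [truncSeq_apply_of_mem y hi] using h i hi
  · simpa [truncSeq_apply, Set.indicator_of_notMem hi] using hC

lemma norm_truncSeq_le (A : Set ℕ) (y : Linf) : ‖truncSeq A y‖ ≤ ‖y‖ :=
  norm_truncSeq_le_of_forall_le A y (norm_nonneg y) fun i _ =>
    lp.norm_apply_le_norm ENNReal.top_ne_zero y i

lemma norm_apply_le_norm_truncSeq {A : Set ℕ} (y : Linf) {i : ℕ} (hi : i ∈ A) :
    ‖y i‖ ≤ ‖truncSeq A y‖ :=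
  truncSeq_apply_of_mem y hi ▸ lp.norm_apply_le_norm ENNReal.top_ne_zero _ i

def truncSeqCLM (A : Set ℕ) : Linf →L[ℝ] Linf :=
  LinearMap.mkContinuous
    { toFun := truncSeq A
      map_add' := fun y z => lp.ext <| funext fun i => by
        simp only [truncSeq_apply, lp.coeFn_add, Set.indicator_add', Pi.add_apply]
      map_smul' := fun c y => lp.ext <| funext fun i => by
        simp only [truncSeq_apply, lp.coeFn_smul, Pi.smul_apply, RingHom.id_apply]
        exact Set.indicator_const_smul_apply A c y i }
    1 fun y => by simpa using norm_truncSeq_le A y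

@[simp]
lemma coe_truncSeqCLM (A : Set ℕ) : ⇑(truncSeqCLM A) = truncSeq A := rfl

lemma antitone_norm_truncSeq_Ici (y : Linf) : Antitone fun n : ℕ => ‖truncSeq (Ici n) y‖ :=
  fun _ _ hmn => norm_truncSeq_le_of_forall_le _ y (norm_nonneg _) fun _ hi =>
    norm_apply_le_norm_truncSeq y (mem_Ici.2 (hmn.trans (mem_Ici.1 hi)))

lemma quotMap_truncSeq_Ici (n : ℕ) (y : Linf) : quotMap (truncSeq (Ici n) y) = quotMap y := by
  refine (Submodule.Quotient.eq c0).2 <| tendsto_const_nhds.congr' ?_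
  filter_upwards [eventually_ge_atTop n] with i hi
  simp [truncSeq_apply_of_mem y (mem_Ici.2 hi)]

lemma norm_quotMap_le_norm_truncSeq_Ici (n : ℕ) (y : Linf) :
    ‖quotMap y‖ ≤ ‖truncSeq (Ici n) y‖ :=
  quotMap_truncSeq_Ici n y ▸ Submodule.Quotient.norm_mk_le c0 _

lemma exists_norm_truncSeq_Ici_le (y : Linf) {δ : ℝ} (hδ : 0 < δ) :
    ∃ N, ‖truncSeq (Ici N) y‖ ≤ ‖quotMap y‖ + δ := by
  obtain ⟨m, hm, hm_lt⟩ := Submodule.Quotient.norm_mk_lt (quotMap y) (half_pos hδ)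
  have hc0 : Tendsto (fun i => (m - y) i) atTop (𝓝 0) := (Submodule.Quotient.eq c0).1 hm
  obtain ⟨N, hN⟩ := Metric.tendsto_atTop.1 hc0 (δ / 2) (half_pos hδ)
  refine ⟨N, norm_truncSeq_le_of_forall_le _ _ (by positivity) fun i hi => ?_⟩
  have hmy : ‖m i - y i‖ < δ / 2 := by simpa using hN i hi
  have hm_i : ‖m i‖ ≤ ‖m‖ := lp.norm_apply_le_norm ENNReal.top_ne_zero m i
  calc ‖y i‖ ≤ ‖m i‖ + ‖m i - y i‖ := norm_le_norm_add_norm_sub _ _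
    _ ≤ ‖quotMap y‖ + δ := by linarith

theorem tendsto_norm_truncSeq_Ici (y : Linf) :
    Tendsto (fun n : ℕ => ‖truncSeq (Ici n) y‖) atTop (𝓝 ‖quotMap y‖) := by
  refine tendsto_order.2 ⟨fun a ha => Eventually.of_forall fun n =>
    ha.trans_le (norm_quotMap_le_norm_truncSeq_Ici n y), fun a ha => ?_⟩
  obtain ⟨N, hN⟩ := exists_norm_truncSeq_Ici_le y (half_pos (sub_pos.2 ha))
  filter_upwards [eventually_ge_atTop N] with n hn
  exact (antitone_norm_truncSeq_Ici y hn).trans_lt (by linarith)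

lemma mem_c0_of_norm_quotMap_eq_zero {y : Linf} (hy : ‖quotMap y‖ = 0) : y ∈ c0 :=
  squeeze_zero_norm (fun i => norm_apply_le_norm_truncSeq y (self_mem_Ici (a := i)))
    (hy ▸ tendsto_norm_truncSeq_Ici y)

theorem isClosed_c0 : IsClosed (c0 : Set Linf) :=
  closure_subset_iff_isClosed.1 fun _ hy =>
    mem_c0_of_norm_quotMap_eq_zero (QuotientAddGroup.norm_mk_eq_zero_iff_mem_closure.2 hy)

lemma continuous_norm_quotMap : Continuous fun y : Linf => ‖quotMap y‖ :=
  (LipschitzWith.of_dist_le_mul (K := 1) fun y z => by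
    simpa [Real.dist_eq, dist_eq_norm, ← map_sub] using
      (abs_norm_sub_norm_le (quotMap y) (quotMap z)).trans
        (Submodule.Quotient.norm_mk_le c0 (y - z))).continuous

theorem eventually_norm_truncSeq_Ici_le (Y : Submodule ℝ Linf) [FiniteDimensional ℝ Y] {δ : ℝ}
    (hδ : 0 < δ) : ∀ᶠ n in atTop, ∀ y ∈ Y, ‖truncSeq (Ici n) y‖ ≤ ‖quotMap y‖ + δ * ‖y‖ := by
  set B : Set Linf := (↑) '' Metric.closedBall (0 : Y) 1
  have hB : IsCompact B := (isCompact_closedBall 0 1).image continuous_subtype_val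
  have hunif : TendstoUniformlyOn (fun (n : ℕ) y => ‖truncSeq (Ici n) y‖)
      (fun y => ‖quotMap y‖) atTop B :=
    Antitone.tendstoUniformlyOn_of_forall_tendsto hB
      (fun n => (truncSeqCLM (Ici n)).continuous.norm.continuousOn)
      (fun y _ => antitone_norm_truncSeq_Ici y) continuous_norm_quotMap.continuousOn
      (fun y _ => tendsto_norm_truncSeq_Ici y)
  filter_upwards [Metric.tendstoUniformlyOn_iff.1 hunif δ hδ] with n hn y hy
  rcases eq_or_ne y 0 with rfl | hy0
  · simp [← coe_truncSeqCLM]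
  have hpos : 0 < ‖y‖ := norm_pos_iff.2 hy0
  have hz : ‖y‖⁻¹ • y ∈ B :=
    ⟨⟨_, Y.smul_mem _ hy⟩, by simp [norm_smul, hpos.ne'], rfl⟩
  have hz_le := (abs_sub_lt_iff.1 (Real.dist_eq _ _ ▸ hn _ hz)).2.le
  rw [← coe_truncSeqCLM, map_smul, map_smul, norm_smul, norm_smul, coe_truncSeqCLM] at hz_le
  simp only [norm_inv, norm_norm] at hz_le
  rw [← mul_le_mul_iff_of_pos_left (inv_pos.2 hpos)]
  calc ‖y‖⁻¹ * ‖truncSeq (Ici n) y‖ ≤ ‖y‖⁻¹ * ‖quotMap y‖ + δ := by linarith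
    _ = ‖y‖⁻¹ * (‖quotMap y‖ + δ * ‖y‖) := by field_simp

theorem exists_norm_le_mul_norm_quotMap (Y : Submodule ℝ Linf) [FiniteDimensional ℝ Y]
    (hinj : ∀ y ∈ Y, quotMap y = 0 → y = 0) :
    ∃ K : ℝ, 0 < K ∧ ∀ y ∈ Y, ‖y‖ ≤ K * ‖quotMap y‖ := by
  -- makes `Linf ⧸ c0` a normed, hence Hausdorff, space, as `exists_antilipschitzWith` requires
  have : IsClosed (c0 : Set Linf) := isClosed_c0
  obtain ⟨K, hK, hanti⟩ := (quotMap.comp Y.subtype).exists_antilipschitzWith <|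
    LinearMap.ker_eq_bot'.2 fun y hy => Subtype.ext (hinj y y.2 hy)
  exact ⟨K, hK, fun y hy => by simpa using hanti.le_mul_norm_sub 0 ⟨y, hy⟩⟩

/-- if `π` restricted to a finite-dimensional subspace `Y ⊆ ℓ∞` is an
isomorphism onto its image `X`, then for every `ε > 0` there is `N` such that for all
`n > N` the map `y_{[n,∞)} ↦ π(y)` is an isomorphism of `Y_{[n,∞)}` onto `X` which is
bounded below by `1 - ε`. -/
theorem stmt0 (Y : Submodule ℝ Linf) (hYfin : FiniteDimensional ℝ Y)
    (hinj : ∀ y ∈ Y, quotMap y = 0 → y = 0)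
    (ε : ℝ) (hε : 0 < ε) :
    ∃ N : ℕ, ∀ n : ℕ, n > N → ∀ y ∈ Y,
      quotMap (truncSeq (Set.Ici n) y) = quotMap y ∧
      (1 - ε) * ‖truncSeq (Set.Ici n) y‖ ≤ ‖quotMap y‖ := by
  obtain ⟨K, hK, hbound⟩ := exists_norm_le_mul_norm_quotMap Y hinj
  obtain ⟨N, hN⟩ := eventually_atTop.1 (eventually_norm_truncSeq_Ici_le Y (div_pos hε hK))
  refine ⟨N, fun n hn y hy => ⟨quotMap_truncSeq_Ici n y, ?_⟩⟩
  have hle : ‖truncSeq (Ici n) y‖ ≤ (1 + ε) * ‖quotMap y‖ := by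
    calc ‖truncSeq (Ici n) y‖ ≤ ‖quotMap y‖ + ε / K * ‖y‖ := hN n hn.le y hy
      _ ≤ ‖quotMap y‖ + ε / K * (K * ‖quotMap y‖) := by gcongr; exact hbound y hy
      _ = (1 + ε) * ‖quotMap y‖ := by field_simp
  rcases le_total ε 1 with hε1 | hε1
  · calc (1 - ε) * ‖truncSeq (Ici n) y‖ ≤ (1 - ε) * ((1 + ε) * ‖quotMap y‖) :=
          mul_le_mul_of_nonneg_left hle (sub_nonneg.2 hε1)
      _ = ‖quotMap y‖ - ε ^ 2 * ‖quotMap y‖ := by ring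
      _ ≤ ‖quotMap y‖ := sub_le_self _ (by positivity)
  · exact (mul_nonpos_of_nonpos_of_nonneg (sub_nonpos.2 hε1) (norm_nonneg _)).trans
      (norm_nonneg _)
end
end

section
/- Let A, B be countably infinite sets with A ⊆ B and B \ A infinite, let C ⊆ ℕ be infinite, let f : A → C be an injection, let g : B → ℕ be an injection such that the range of g is almost contained in C (ran(g) \ C finite), C \ ran(g) is infinite, and f differs from g restricted to A only at finitely many points. Let F ⊆ C be finite. Then there exists an injection h : B → C such that h extends f, h differs from g at only finitely many points of B, and F ⊆ ran(h). -/
/-!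
Put `k := f` on `A` and `k := g` on `B \ A`. As `f = g` off a finite subset `E` of `A` and `g` is
injective, `k` is an injection into `C` once the finitely many points of `B \ A` where `g` leaves
`C` or meets `f '' E` are set aside; these are given, one at a time, unused values of the infinite
set `C \ g '' B`. Then each missing `c ∈ F` is taken as the new value of a point of `B \ A` whose
old value is not in `F`, which exists because `B \ A` is infinite.
-/

section

open Set Function

variable {α β : Type*}

/-- `u =* v` on `s`. -/
def AlmostEqOn (u v : α → β) (s : Set α) : Prop := {x ∈ s | u x ≠ v x}.Finite

theorem AlmostEqOn.trans {u v w : α → β} {s : Set α} (huv : AlmostEqOn u v s)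
    (hvw : AlmostEqOn v w s) : AlmostEqOn u w s :=
  (huv.union hvw).subset fun x ⟨hx, hne⟩ => by
    by_cases h : u x = v x
    · exact Or.inr ⟨hx, h ▸ hne⟩
    · exact Or.inl ⟨hx, h⟩

theorem Set.EqOn.almostEqOn_of_diff {u v : α → β} {s t : Set α} (h : EqOn u v (s \ t))
    (ht : t.Finite) : AlmostEqOn u v s :=
  ht.subset fun _ ⟨hx, hne⟩ => by_contra fun hxt => hne (h ⟨hx, hxt⟩)

theorem Set.InjOn.update_insert [DecidableEq α] {k : α → β} {s : Set α} {x : α} {c : β}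
    (hx : x ∉ s) (hk : InjOn k s) (hc : c ∉ k '' s) : InjOn (update k x c) (insert x s) := by
  have hks : EqOn (update k x c) k s := fun y hy =>
    update_of_ne (ne_of_mem_of_not_mem hy hx) _ _
  rw [injOn_insert hx, hks.image_eq, update_self]
  exact ⟨hk.congr hks.symm, hc⟩

theorem mapsTo_update_insert [DecidableEq α] {k : α → β} {s : Set α} {C : Set β} {x : α}
    {c : β} (hk : MapsTo k s C) (hc : c ∈ C) : MapsTo (update k x c) (insert x s) C := by
  rintro y (rfl | hy)
  · simpa using hc
  · by_cases hyx : y = x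
    · simpa [hyx] using hc
    · simpa [hyx] using hk hy

theorem image_update_subset [DecidableEq α] (k : α → β) (s : Set α) (x : α) (c : β) :
    update k x c '' s ⊆ insert c (k '' s) := by
  rintro _ ⟨y, hy, rfl⟩
  by_cases hyx : y = x
  · simp [hyx]
  · exact Or.inr ⟨y, hy, (update_of_ne hyx _ _).symm⟩

theorem exists_injOn_mapsTo_eqOn_diff {B S : Set α} {C : Set β} {k : α → β} (hS : S.Finite)
    (hinj : InjOn k (B \ S)) (hmaps : MapsTo k (B \ S) C) (hfresh : (C \ k '' B).Infinite) :
    ∃ h : α → β, InjOn h B ∧ MapsTo h B C ∧ EqOn h k (B \ S) := by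
  classical
  induction S, hS using Set.Finite.induction_on generalizing k with
  | empty => exact ⟨k, by simpa using hinj, by simpa using hmaps, eqOn_refl _ _⟩
  | @insert x S _ _ ih =>
    obtain ⟨c, hcC, hck⟩ := hfresh.nonempty
    have hsub : B \ S ⊆ insert x (B \ insert x S) := by
      intro y ⟨hyB, hyS⟩
      by_cases hyx : y = x
      · exact Or.inl hyx
      · exact Or.inr ⟨hyB, by simp [hyx, hyS]⟩
    have hx : x ∉ B \ insert x S := fun h => h.2 (mem_insert x S)
    have hck' : c ∉ k '' (B \ insert x S) := fun h => hck (image_mono sdiff_subset h)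
    have hfresh' : (C \ update k x c '' B).Infinite :=
      (hfresh.sdiff (finite_singleton c)).mono
        fun d (⟨⟨hdC, hdk⟩, hdc⟩ : d ∈ (C \ k '' B) \ {c}) =>
          ⟨hdC, fun h => (image_update_subset k B x c h).elim hdc hdk⟩
    obtain ⟨h, hinj', hmaps', heq⟩ := ih ((hinj.update_insert hx hck').mono hsub)
      ((mapsTo_update_insert hmaps hcC).mono_left hsub) hfresh'
    refine ⟨h, hinj', hmaps', fun y hy => ?_⟩
    have hyx : y ≠ x := fun h => hx (h ▸ hy)
    rw [heq ⟨hy.1, fun h => hy.2 (mem_insert_of_mem x h)⟩, update_of_ne hyx]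

theorem exists_injOn_mapsTo_subset_image {A B : Set α} {C F : Set β} {k : α → β}
    (hBA : (B \ A).Infinite) (hF : F.Finite) (hFC : F ⊆ C) (hinj : InjOn k B)
    (hmaps : MapsTo k B C) :
    ∃ h : α → β, InjOn h B ∧ MapsTo h B C ∧ EqOn h k A ∧ AlmostEqOn h k B ∧
      F ⊆ h '' B := by
  classical
  induction F, hF using Set.Finite.induction_on with
  | empty => exact ⟨k, hinj, hmaps, eqOn_refl _ _, by simp [AlmostEqOn], empty_subset _⟩
  | @insert c F _ hF ih =>
    obtain ⟨h, hinj, hmaps, hhk, hae, hFh⟩ := ih (subset_trans (subset_insert c F) hFC)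
    by_cases hc : c ∈ h '' B
    · exact ⟨h, hinj, hmaps, hhk, hae, insert_subset hc hFh⟩
    have hpre : (B ∩ h ⁻¹' F).Finite :=
      Finite.of_finite_image (hF.subset (image_subset_iff.2 fun _ hy => hy.2))
        (hinj.mono inter_subset_left)
    obtain ⟨x, ⟨hxB, hxA⟩, hxF⟩ := (hBA.sdiff hpre).nonempty
    have hxF : h x ∉ F := fun h' => hxF ⟨hxB, h'⟩
    have hx : x ∉ B \ {x} := fun h => h.2 rfl
    have hBx : insert x (B \ {x}) = B := by rw [insert_sdiff_singleton, insert_eq_of_mem hxB]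
    have hupd : EqOn (update h x c) h (B \ {x}) := fun y hy => update_of_ne hy.2 _ _
    refine ⟨update h x c, ?_, ?_, ?_, ?_, ?_⟩
    · rw [← hBx]
      exact (hinj.mono sdiff_subset).update_insert hx fun h' => hc (image_mono sdiff_subset h')
    · exact hBx ▸ mapsTo_update_insert (hmaps.mono_left sdiff_subset) (hFC (mem_insert c F))
    · exact fun y hy => (update_of_ne (ne_of_mem_of_not_mem hy hxA) _ _).trans (hhk hy)
    · exact (hupd.almostEqOn_of_diff (finite_singleton x)).trans hae
    · refine insert_subset ⟨x, hxB, update_self _ _ _⟩ fun d hd => ?_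
      obtain ⟨y, hyB, rfl⟩ := hFh hd
      have hyx : y ≠ x := fun hyx => hxF (hyx ▸ hd)
      exact ⟨y, hyB, hupd ⟨hyB, hyx⟩⟩

theorem exists_injOn_mapsTo_eqOn_almostEqOn {A B : Set α} {C : Set β} {f g : α → β}
    (hAB : A ⊆ B) (hfinj : InjOn f A) (hfC : MapsTo f A C) (hginj : InjOn g B)
    (hgC : (g '' B \ C).Finite) (hCg : (C \ g '' B).Infinite) (hfg : AlmostEqOn f g A) :
    ∃ h : α → β, InjOn h B ∧ MapsTo h B C ∧ EqOn h f A ∧ AlmostEqOn h g B := by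
  classical
  set E := {x ∈ A | f x ≠ g x}
  have hfE : ∀ x ∈ A, f x ∉ f '' E → f x = g x := fun x hx hxE =>
    by_contra fun hne => hxE ⟨x, ⟨hx, hne⟩, rfl⟩
  -- the points of `B \ A` where `g` must be redefined
  set S := (B \ A) ∩ g ⁻¹' (Cᶜ ∪ f '' E)
  have hS : S.Finite := by
    refine Finite.of_finite_image ((hgC.union (hfg.image f)).subset ?_)
      (hginj.mono fun x hx => hx.1.1)
    rintro _ ⟨x, ⟨⟨hxB, -⟩, hxC | hxE⟩, rfl⟩
    exacts [Or.inl ⟨mem_image_of_mem g hxB, hxC⟩, Or.inr hxE]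
  set k := A.piecewise f g
  have hkf : EqOn k f A := fun x hx => piecewise_eq_of_mem _ _ _ hx
  have hkg : EqOn k g Aᶜ := fun x hx => piecewise_eq_of_notMem _ _ _ hx
  have hBS : B \ S = A ∪ ((B \ A) \ S) := by
    ext x
    have := @hAB x
    simp only [S, mem_sdiff, mem_inter_iff, mem_union]
    tauto
  have hkinj : InjOn k (B \ S) := by
    rw [hBS, injOn_union (disjoint_sdiff_right.mono_right sdiff_subset)]
    refine ⟨hfinj.congr hkf.symm,
      (hginj.mono fun x hx => hx.1.1).congr fun x hx => (hkg hx.1.2).symm,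
      fun x hx y ⟨⟨hyB, hyA⟩, hyS⟩ hxy => ?_⟩
    rw [hkf hx, hkg hyA] at hxy
    have hfx : f x ∉ f '' E := fun hx' => hyS ⟨⟨hyB, hyA⟩, Or.inr (hxy ▸ hx')⟩
    exact hyA (hginj (hAB hx) hyB ((hfE x hx hfx).symm.trans hxy) ▸ hx)
  have hkC : MapsTo k (B \ S) C := by
    rw [hBS]
    rintro x (hx | ⟨⟨hxB, hxA⟩, hxS⟩)
    · exact hkf hx ▸ hfC hx
    · exact hkg hxA ▸ by_contra fun hxC => hxS ⟨⟨hxB, hxA⟩, Or.inl hxC⟩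
  have hkfresh : (C \ k '' B).Infinite := by
    refine (hCg.sdiff (hfg.image f)).mono
      fun c (⟨⟨hcC, hcg⟩, hcE⟩ : c ∈ (C \ g '' B) \ f '' E) => ⟨hcC, ?_⟩
    rintro ⟨x, hxB, rfl⟩
    by_cases hxA : x ∈ A
    · exact hcg ⟨x, hxB, (hfE x hxA (hkf hxA ▸ hcE)).symm.trans (hkf hxA).symm⟩
    · exact hcg ⟨x, hxB, (hkg hxA).symm⟩
  obtain ⟨h, hinj, hmaps, hhk⟩ := exists_injOn_mapsTo_eqOn_diff hS hkinj hkC hkfresh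
  have hhf : EqOn h f A := fun x hx => (hhk (hBS ▸ Or.inl hx)).trans (hkf hx)
  refine ⟨h, hinj, hmaps, hhf, (hhk.almostEqOn_of_diff hS).trans (hfg.subset ?_)⟩
  rintro x ⟨hxB, hne⟩
  by_cases hxA : x ∈ A
  · exact ⟨hxA, hkf hxA ▸ hne⟩
  · exact absurd (hkg hxA) hne

end

theorem stmt2_general {α : Type*} (A B : Set α) (C : Set ℕ) (f g : α → ℕ) (F : Set ℕ)
    (hAB : A ⊆ B)
    (hBA : (B \ A).Infinite)
    (hfinj : Set.InjOn f A) (hfC : Set.MapsTo f A C)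
    (hginj : Set.InjOn g B)
    (hgC : (g '' B \ C).Finite) (hCg : (C \ g '' B).Infinite)
    (hfg : {x ∈ A | f x ≠ g x}.Finite)
    (hF : F.Finite) (hFC : F ⊆ C) :
    ∃ h : α → ℕ, Set.InjOn h B ∧ Set.MapsTo h B C ∧
      (∀ x ∈ A, h x = f x) ∧ {x ∈ B | h x ≠ g x}.Finite ∧ F ⊆ h '' B := by
  obtain ⟨h₁, hinj₁, hmaps₁, hh₁f, hh₁g⟩ :=
    exists_injOn_mapsTo_eqOn_almostEqOn hAB hfinj hfC hginj hgC hCg hfg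
  obtain ⟨h, hinj, hmaps, hhh₁, hhh₁', hFh⟩ :=
    exists_injOn_mapsTo_subset_image hBA hF hFC hinj₁ hmaps₁
  exact ⟨h, hinj, hmaps, fun x hx => (hhh₁ hx).trans (hh₁f hx), hhh₁'.trans hh₁g, hFh⟩

/-- extension of almost-equal injections. -/
theorem stmt2 {α : Type*} (A B : Set α) (C : Set ℕ) (f g : α → ℕ) (F : Set ℕ)
    (hAB : A ⊆ B) (hAcnt : A.Countable) (hAinf : A.Infinite)
    (hBcnt : B.Countable) (hBA : (B \ A).Infinite)
    (hC : C.Infinite)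
    (hfinj : Set.InjOn f A) (hfC : Set.MapsTo f A C)
    (hginj : Set.InjOn g B)
    (hgC : (g '' B \ C).Finite) (hCg : (C \ g '' B).Infinite)
    (hfg : {x ∈ A | f x ≠ g x}.Finite)
    (hF : F.Finite) (hFC : F ⊆ C) :
    ∃ h : α → ℕ, Set.InjOn h B ∧ Set.MapsTo h B C ∧
      (∀ x ∈ A, h x = f x) ∧ {x ∈ B | h x ≠ g x}.Finite ∧ F ⊆ h '' B :=
  stmt2_general A B C f g F hAB hBA hfinj hfC hginj hgC hCg hfg hF hFC
end

section
/- Let 𝒜 be a maximal almost disjoint family of infinite subsets of ℕ, and let X ⊆ ℕ be a set that is not almost covered by finitely many elements of 𝒜 (i.e., for no finite ℱ ⊆ 𝒜 is X \ ⋃ℱ finite). Then the set {A ∈ 𝒜 : A ∩ X is infinite} has cardinality at least 𝔞, where 𝔞 is the least cardinality of an infinite maximal almost disjoint family. Equivalently: if |{A ∈ 𝒜 : |A ∩ X| = ω}| < 𝔞 then X is almost covered by finitely many elements of 𝒜. -/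
/-- An (infinite) almost disjoint family of infinite subsets of `ℕ`. -/
def IsAlmostDisjointFamily (𝒜 : Set (Set ℕ)) : Prop :=
  𝒜.Infinite ∧ (∀ A ∈ 𝒜, A.Infinite) ∧
    ∀ A ∈ 𝒜, ∀ B ∈ 𝒜, A ≠ B → (A ∩ B).Finite

/-- A maximal almost disjoint (MAD) family: almost disjoint, and every infinite
`X ⊆ ℕ` has infinite intersection with some member. -/
def IsMadFamily (𝒜 : Set (Set ℕ)) : Prop :=
  IsAlmostDisjointFamily 𝒜 ∧ ∀ X : Set ℕ, X.Infinite → ∃ A ∈ 𝒜, (X ∩ A).Infinite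

/-- The cardinal invariant `𝔞`: the least cardinality of an infinite MAD family. -/
noncomputable def aInvariant : Cardinal :=
  sInf { c : Cardinal | ∃ 𝒜 : Set (Set ℕ), IsMadFamily 𝒜 ∧ c = Cardinal.mk ↥𝒜 }

/-- if `X` is not almost covered by finitely many members of a MAD
family `𝒜`, then at least `𝔞` many members of `𝒜` meet `X` in an infinite set. -/
theorem stmt3 (𝒜 : Set (Set ℕ)) (h𝒜 : IsMadFamily 𝒜) (X : Set ℕ)
    (hX : ∀ ℱ : Finset (Set ℕ), ↑ℱ ⊆ 𝒜 → (X \ ⋃ A ∈ ℱ, A).Infinite) :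
    aInvariant ≤ Cardinal.mk {A : Set ℕ // A ∈ 𝒜 ∧ (A ∩ X).Infinite} := by
  obtain ⟨⟨h𝒜inf, h𝒜mem, h𝒜ad⟩, h𝒜max⟩ := h𝒜
  set 𝒜' : Set (Set ℕ) := {A | A ∈ 𝒜 ∧ (A ∩ X).Infinite} with h𝒜'
  -- X is infinite
  have hXinf : X.Infinite := by
    have := hX ∅ (by simp)
    simpa using this
  -- 𝒜' is infinite
  have h𝒜'inf : 𝒜'.Infinite := by
    by_contra hfin
    rw [Set.not_infinite] at hfin
    obtain ⟨ℱ, hℱ⟩ := hfin.exists_finset_coe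
    have hℱsub : ↑ℱ ⊆ 𝒜 := by rw [hℱ]; exact fun A hA => hA.1
    have hbig := hX ℱ hℱsub
    obtain ⟨A, hA𝒜, hAint⟩ := h𝒜max _ hbig
    have hA' : A ∈ 𝒜' := by
      refine ⟨hA𝒜, ?_⟩
      apply Set.Infinite.mono ?_ hAint
      intro x hx
      exact ⟨hx.2, hx.1.1⟩
    have hAℱ : A ∈ ℱ := by rwa [← Finset.mem_coe, hℱ]
    apply hAint.nonempty.elim
    rintro x ⟨⟨-, hx2⟩, hx3⟩
    exact hx2 (Set.mem_biUnion hAℱ hx3)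
  -- a bijection ℕ ≃ X
  have : Countable ↥X := X.to_countable
  have : Infinite ↥X := hXinf.to_subtype
  obtain ⟨e⟩ : Nonempty (ℕ ≃ ↥X) := nonempty_equiv_of_countable
  set g : ℕ → ℕ := fun n => (e n : ℕ) with hg
  have hginj : Function.Injective g := fun a b hab => e.injective (Subtype.ext hab)
  have hgrange : Set.range g = X := by
    ext x
    constructor
    · rintro ⟨n, rfl⟩; exact (e n).2
    · intro hx; exact ⟨e.symm ⟨x, hx⟩, by simp [hg]⟩
  set f : Set ℕ → Set ℕ := fun A => g ⁻¹' A with hf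
  -- preimages of infinite subsets of X are infinite
  have hpre : ∀ A : Set ℕ, A ⊆ X → A.Infinite → (g ⁻¹' A).Infinite := by
    intro A hAX hAinf
    exact hAinf.preimage (by rw [hgrange]; exact hAX)
  -- f is injective on 𝒜'
  have hfinj : Set.InjOn f 𝒜' := by
    intro A hA B hB hAB
    by_contra hne
    have hABfin : (A ∩ B).Finite := h𝒜ad A hA.1 B hB.1 hne
    have h1 : g ⁻¹' (A ∩ X) = g ⁻¹' (B ∩ X) := by
      have : g ⁻¹' A = g ⁻¹' B := hAB
      simp only [Set.preimage_inter, this]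
    have himg : ∀ C : Set ℕ, g '' (g ⁻¹' (C ∩ X)) = C ∩ X := by
      intro C
      rw [Set.image_preimage_eq_inter_range, hgrange, Set.inter_assoc, Set.inter_self]
    have h2 : A ∩ X = B ∩ X := by
      rw [← himg A, ← himg B, h1]
    have hinf : (B ∩ X).Infinite := hB.2
    have hsub : B ∩ X ⊆ A ∩ B := fun x hx => ⟨(h2.symm ▸ hx : x ∈ A ∩ X).1, hx.1⟩
    exact hinf (hABfin.subset hsub)
  -- f '' 𝒜' is a MAD family
  have hmad : IsMadFamily (f '' 𝒜') := by
    refine ⟨⟨h𝒜'inf.image hfinj, ?_, ?_⟩, ?_⟩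
    · rintro B ⟨A, hA, rfl⟩
      have : (g ⁻¹' (A ∩ X)).Infinite :=
        hpre _ (fun x hx => hx.2) hA.2
      apply this.mono
      intro x hx; exact hx.1
    · rintro B ⟨A, hA, rfl⟩ B' ⟨A', hA', rfl⟩ hne
      have hAAne : A ≠ A' := fun h => hne (by rw [h])
      have : (A ∩ A').Finite := h𝒜ad A hA.1 A' hA'.1 hAAne
      have : (g ⁻¹' (A ∩ A')).Finite := this.preimage (hginj.injOn)
      simpa [Set.preimage_inter] using this
    · intro Y hY
      have hgY : (g '' Y).Infinite := hY.image hginj.injOn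
      obtain ⟨A, hA𝒜, hint⟩ := h𝒜max _ hgY
      have hA' : A ∈ 𝒜' := by
        refine ⟨hA𝒜, hint.mono ?_⟩
        rintro x ⟨⟨n, hn, rfl⟩, hxA⟩
        exact ⟨hxA, hgrange ▸ ⟨n, rfl⟩⟩
      refine ⟨f A, ⟨A, hA', rfl⟩, ?_⟩
      have hsubX : g '' Y ∩ A ⊆ X := by
        rintro x ⟨⟨n, hn, rfl⟩, -⟩
        exact hgrange ▸ ⟨n, rfl⟩
      have : (g ⁻¹' (g '' Y ∩ A)).Infinite := hpre _ hsubX hint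
      apply this.mono
      intro x hx
      rw [Set.preimage_inter, hginj.preimage_image] at hx
      exact hx
  -- conclude
  have hle : aInvariant ≤ Cardinal.mk ↥(f '' 𝒜') :=
    csInf_le' ⟨f '' 𝒜', hmad, rfl⟩
  have heq : Cardinal.mk ↥(f '' 𝒜') = Cardinal.mk ↥𝒜' :=
    Cardinal.mk_image_eq_of_injOn f 𝒜' hfinj
  calc aInvariant ≤ Cardinal.mk ↥(f '' 𝒜') := hle
    _ = Cardinal.mk ↥𝒜' := heq
    _ = Cardinal.mk {A : Set ℕ // A ∈ 𝒜 ∧ (A ∩ X).Infinite} := rfl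
end

section
/- Let κ be a cardinal and {A_ξ : ξ < κ} an almost disjoint family of infinite subsets of ℕ. Suppose S : ℓ∞^c(κ) → C(ℕ*) is an isometric embedding (a linear isometry onto its image) satisfying S(1_{{ξ}}) = 1_{[A_ξ]} for every ξ < κ. Then for every countable F ⊆ κ there exists V ⊆ ℕ such that A_ξ ⊆* V for all ξ ∈ F and A_ξ ∩ V =* ∅ for all ξ ∉ F. -/
set_option synthInstance.maxHeartbeats 400000
set_option maxHeartbeats 1000000

noncomputable section

open Set Filter
open scoped ENNReal

/-- `ℓ∞(κ)`: bounded real-valued functions on `κ` with the sup norm. -/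
abbrev LinfK (κ : Type*) : Type _ := ↥(lp (fun _ : κ => ℝ) ∞)

/-- `ℓ∞^c(κ)`: the subspace of `ℓ∞(κ)` of countably supported functions. -/
def linfc (κ : Type*) : Submodule ℝ (LinfK κ) where
  carrier := {f | (Function.support (⇑f)).Countable}
  add_mem' := by
    intro f g hf hg
    refine Set.Countable.mono ?_ (hf.union hg)
    rw [lp.coeFn_add]
    exact Function.support_add _ _
  zero_mem' := by
    simp [Function.support, lp.coeFn_zero]
  smul_mem' := by
    intro c f hf
    refine Set.Countable.mono ?_ hf
    rw [lp.coeFn_smul]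
    exact Function.support_const_smul_subset c _

/-- The indicator function `1_F` of a countable `F ⊆ κ`, as an element of `ℓ∞^c(κ)`. -/
def indLinfc {κ : Type*} (F : Set κ) (hF : F.Countable) : ↥(linfc κ) :=
  ⟨⟨F.indicator (fun _ => (1 : ℝ)), memℓp_infty ⟨1, by
      rintro x ⟨i, rfl⟩
      by_cases h : i ∈ F
      · simp [Set.indicator_of_mem h]
      · simp [Set.indicator_of_notMem h]⟩⟩,
    Set.Countable.mono (Set.support_indicator_subset) hF⟩

/-- The unit vector `1_{{ξ}}` of `ℓ∞^c(κ)`. -/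
def unitVecC {κ : Type*} (ξ : κ) : ↥(linfc κ) :=
  indLinfc ({ξ} : Set κ) (Set.countable_singleton ξ)

/-- `ℕ* = βℕ \ ℕ`: the space of nonprincipal ultrafilters on `ℕ`. -/
def NStar : Type := {u : Ultrafilter ℕ // ∀ n : ℕ, u ≠ (pure n : Ultrafilter ℕ)}

instance : TopologicalSpace NStar := instTopologicalSpaceSubtype

/-- The clopen subset `[A] ⊆ ℕ*` determined by `A ⊆ ℕ`. -/
def clopenOf (A : Set ℕ) : Set NStar := {u : NStar | A ∈ u.1}

theorem isClopen_clopenOf (A : Set ℕ) : IsClopen (clopenOf A) :=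
  ⟨(ultrafilter_isClosed_basic A).preimage continuous_subtype_val,
   (ultrafilter_isOpen_basic A).preimage continuous_subtype_val⟩

/-- The characteristic function `1_{[A]} ∈ C(ℕ*)`. -/
def indBCF (A : Set ℕ) : BoundedContinuousFunction NStar ℝ :=
  BoundedContinuousFunction.indicator (clopenOf A) (isClopen_clopenOf A)

/-! Put `g = S 1_F`. Since `‖1_F - 2 • 1_{ξ}‖ ≤ 1` for `ξ ∈ F` and `‖1_F + 1_{ξ}‖ ≤ 1` for
`ξ ∉ F`, the isometry forces `|g - 2 • 1_{[A_ξ]}| ≤ 1`, resp. `|g + 1_{[A_ξ]}| ≤ 1`, pointwise;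
so `g ≥ 1` on `[A_ξ]` for `ξ ∈ F` and `g ≤ 0` on `[A_ξ]` for `ξ ∉ F`. In the compact
zero-dimensional space `ℕ*` some clopen `[V]` separates the compact set `{g ≥ 1}` from the
complement of the open set `{g > 1/2}`, and `[B] ⊆ [C]` means `B ⊆* C`. -/

theorem Ultrafilter.le_cofinite_iff_forall_ne_pure {α : Type*} (u : Ultrafilter α) :
    (u : Filter α) ≤ cofinite ↔ ∀ a, u ≠ pure a := by
  refine ⟨fun h a hu => ?_, fun h => u.le_cofinite_or_eq_pure.resolve_right fun ⟨a, ha⟩ => h a ha⟩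
  have := le_cofinite_iff_compl_singleton_mem.1 h a
  simp [hu] at this

namespace NStar

instance : CompactSpace NStar := by
  have hclosed : IsClosed {u : Ultrafilter ℕ | ∀ n : ℕ, u ≠ pure n} := by
    have : {u : Ultrafilter ℕ | ∀ n : ℕ, u ≠ pure n} = ⋂ n : ℕ, {u | ({n}ᶜ : Set ℕ) ∈ u} := by
      ext u
      simp [← Ultrafilter.le_cofinite_iff_forall_ne_pure, le_cofinite_iff_compl_singleton_mem]
    rw [this]
    exact isClosed_iInter fun n => ultrafilter_isClosed_basic _
  exact isCompact_iff_compactSpace.mp hclosed.isCompact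

theorem exists_mem_of_infinite {B : Set ℕ} (hB : B.Infinite) : ∃ u : NStar, B ∈ u.1 := by
  have := hB.cofinite_inf_principal_neBot
  obtain ⟨u, hu⟩ := exists_ultrafilter_le (cofinite ⊓ 𝓟 B)
  exact ⟨⟨u, (u.le_cofinite_iff_forall_ne_pure).1 (hu.trans inf_le_left)⟩,
    le_principal_iff.1 (hu.trans inf_le_right)⟩

theorem clopenOf_compl (B : Set ℕ) : clopenOf Bᶜ = (clopenOf B)ᶜ := by
  ext u
  exact Ultrafilter.compl_mem_iff_notMem

theorem diff_finite_of_clopenOf_subset {B C : Set ℕ} (h : clopenOf B ⊆ clopenOf C) :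
    (B \ C).Finite := by
  by_contra hinf
  obtain ⟨u, hu⟩ := exists_mem_of_infinite hinf
  have hC : C ∈ u.1 := h (mem_of_superset hu sdiff_subset)
  obtain ⟨n, hnB, hnC⟩ := Ultrafilter.nonempty_of_mem (inter_mem hu hC)
  exact hnB.2 hnC

theorem exists_clopenOf_subset_of_isOpen {U : Set NStar} (hU : IsOpen U) {u : NStar}
    (hu : u ∈ U) : ∃ B : Set ℕ, B ∈ u.1 ∧ clopenOf B ⊆ U := by
  obtain ⟨W, hW, rfl⟩ := isOpen_induced_iff.1 hU
  obtain ⟨_, ⟨B, rfl⟩, huB, hBW⟩ := ultrafilterBasis_is_basis.exists_subset_of_mem_open hu hW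
  exact ⟨B, huB, fun v hv => hBW hv⟩

theorem exists_clopenOf_between {K U : Set NStar} (hK : IsClosed K) (hU : IsOpen U)
    (hKU : K ⊆ U) : ∃ V : Set ℕ, K ⊆ clopenOf V ∧ clopenOf V ⊆ U := by
  let ι := {B : Set ℕ // clopenOf B ⊆ U}
  have hcover : K ⊆ ⋃ B : ι, clopenOf B.1 := fun u hu => by
    obtain ⟨B, huB, hBU⟩ := exists_clopenOf_subset_of_isOpen hU (hKU hu)
    exact mem_iUnion.2 ⟨⟨B, hBU⟩, huB⟩
  obtain ⟨t, ht⟩ :=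
    hK.isCompact.elim_finite_subcover _ (fun B : ι => (isClopen_clopenOf B.1).isOpen) hcover
  refine ⟨⋃ B ∈ t, B.1, fun u hu => ?_, fun u hu => ?_⟩
  · obtain ⟨B, hBt, huB⟩ := mem_iUnion₂.1 (ht hu)
    exact mem_of_superset huB (subset_iUnion₂ (s := fun (B : ι) (_ : B ∈ t) => B.1) B hBt)
  · obtain ⟨B, -, huB⟩ := (Ultrafilter.finite_biUnion_mem_iff t.finite_toSet).1 hu
    exact B.2 huB

end NStar

theorem LinearIsometry.abs_apply_le_norm {E X : Type*} [SeminormedAddCommGroup E]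
    [NormedSpace ℝ E] [TopologicalSpace X] (S : E →ₗᵢ[ℝ] BoundedContinuousFunction X ℝ)
    (x : E) (u : X) : |S x u| ≤ ‖x‖ :=
  S.norm_map x ▸ (S x).norm_coe_le_norm u

theorem indBCF_apply_of_mem {A : Set ℕ} {u : NStar} (hu : u ∈ clopenOf A) : indBCF A u = 1 := by
  simp [indBCF, hu]

section linfc

variable {κ : Type*}

theorem norm_indLinfc_sub_two_smul_unitVecC_le {F : Set κ} (hF : F.Countable) {ξ : κ}
    (hξ : ξ ∈ F) : ‖indLinfc F hF - (2 : ℝ) • unitVecC ξ‖ ≤ 1 := by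
  refine lp.norm_le_of_forall_le zero_le_one fun i => ?_
  change |F.indicator (fun _ => (1 : ℝ)) i - 2 * ({ξ} : Set κ).indicator (fun _ => 1) i| ≤ 1
  by_cases hi : i = ξ
  · subst hi; norm_num [hξ]
  · by_cases hiF : i ∈ F <;> simp [hi, hiF]

theorem norm_indLinfc_add_unitVecC_le {F : Set κ} (hF : F.Countable) {ξ : κ}
    (hξ : ξ ∉ F) : ‖indLinfc F hF + unitVecC ξ‖ ≤ 1 := by
  refine lp.norm_le_of_forall_le zero_le_one fun i => ?_
  change |F.indicator (fun _ => (1 : ℝ)) i + ({ξ} : Set κ).indicator (fun _ => 1) i| ≤ 1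
  by_cases hi : i = ξ
  · subst hi; simp [hξ]
  · by_cases hiF : i ∈ F <;> simp [hi, hiF]

variable {A : κ → Set ℕ} {S : ↥(linfc κ) →ₗᵢ[ℝ] BoundedContinuousFunction NStar ℝ}
  (hS : ∀ ξ, S (unitVecC ξ) = indBCF (A ξ)) {F : Set κ} (hF : F.Countable) {ξ : κ}
  {u : NStar}
include hS

theorem one_le_apply_indLinfc_of_mem (hξ : ξ ∈ F) (hu : u ∈ clopenOf (A ξ)) :
    1 ≤ S (indLinfc F hF) u := by
  have h := (S.abs_apply_le_norm _ u).trans (norm_indLinfc_sub_two_smul_unitVecC_le hF hξ)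
  rw [map_sub, map_smul, hS] at h
  simp only [BoundedContinuousFunction.coe_sub, BoundedContinuousFunction.coe_smul, Pi.sub_apply,
    smul_eq_mul, indBCF_apply_of_mem hu] at h
  linarith [(abs_le.1 h).1]

theorem apply_indLinfc_nonpos_of_notMem (hξ : ξ ∉ F) (hu : u ∈ clopenOf (A ξ)) :
    S (indLinfc F hF) u ≤ 0 := by
  have h := (S.abs_apply_le_norm _ u).trans (norm_indLinfc_add_unitVecC_le hF hξ)
  rw [map_add, hS] at h
  simp only [BoundedContinuousFunction.coe_add, Pi.add_apply, indBCF_apply_of_mem hu] at h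
  linarith [(abs_le.1 h).2]

end linfc

theorem stmt5_general {κ : Type*} (A : κ → Set ℕ)
    (S : ↥(linfc κ) →ₗᵢ[ℝ] BoundedContinuousFunction NStar ℝ)
    (hS : ∀ ξ, S (unitVecC ξ) = indBCF (A ξ))
    (F : Set κ) (hF : F.Countable) :
    ∃ V : Set ℕ, (∀ ξ ∈ F, (A ξ \ V).Finite) ∧ (∀ ξ ∉ F, (A ξ ∩ V).Finite) := by
  set g := S (indLinfc F hF)
  obtain ⟨V, hKV, hVU⟩ := NStar.exists_clopenOf_between (isClosed_Ici.preimage g.continuous)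
    (isOpen_Ioi.preimage g.continuous) (preimage_mono (Ici_subset_Ioi.2 one_half_lt_one))
  refine ⟨V, fun ξ hξ => NStar.diff_finite_of_clopenOf_subset fun u hu => ?_, fun ξ hξ => ?_⟩
  · exact hKV (one_le_apply_indLinfc_of_mem hS hF hξ hu)
  · rw [← sdiff_compl]
    refine NStar.diff_finite_of_clopenOf_subset ?_
    rw [NStar.clopenOf_compl]
    intro u hu huV
    have h0 : g u ≤ 0 := apply_indLinfc_nonpos_of_notMem hS hF hξ hu
    have h1 : 1 / 2 < g u := hVU huV
    linarith

/-- if `S : ℓ∞^c(κ) → C(ℕ*)` is an isometric embedding with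
`S(1_{{ξ}}) = 1_{[A_ξ]}` for an almost disjoint family `{A_ξ}`, then every countable
`F ⊆ κ` admits a separation `V ⊆ ℕ` with `A_ξ ⊆* V` for `ξ ∈ F` and
`A_ξ ∩ V =* ∅` for `ξ ∉ F`. -/
theorem stmt5 {κ : Type*} (A : κ → Set ℕ) (hinj : Function.Injective A)
    (hAinf : ∀ ξ, (A ξ).Infinite)
    (hAD : ∀ ξ η, ξ ≠ η → (A ξ ∩ A η).Finite)
    (S : ↥(linfc κ) →ₗᵢ[ℝ] BoundedContinuousFunction NStar ℝ)
    (hS : ∀ ξ, S (unitVecC ξ) = indBCF (A ξ))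
    (F : Set κ) (hF : F.Countable) :
    ∃ V : Set ℕ, (∀ ξ ∈ F, (A ξ \ V).Finite) ∧ (∀ ξ ∉ F, (A ξ ∩ V).Finite) :=
  stmt5_general A S hS F hF
end
end

section
/- Let 𝒜 be the Boolean algebra of subsets of ω₁ of the form U_X = ⋃_{ξ∈X} I_ξ, where I_ξ = [ω·ξ, ω·(ξ+1)) and X ⊆ ω₁ is countable or cocountable. Given a coherent family {s_α : α < ω₁}, the map h : 𝒜 → 𝒫(ℕ)/Fin defined by h(U_X) = [s_{α(X)}[U_X]] for countable X (where α(X) is least with X ⊆ ω·α(X), identifying ω·α(X) with a subset of the domain appropriately) and h(U_X) = complement of h(U_{ω₁\X}) for cocountable X, is a well-defined injective Boolean homomorphism. -/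
/-!
Fix `α < ω₁` lying above the countable sides of the finitely many sets involved. Collapse `ℕ`
onto `α + 1` by sending `s_α(x)`, for `x < ω·α`, to the index `x / ω` of the block `I_ξ`
containing `x`, and every other number to `α`. By coherence, `h(U_X)` agrees modulo finite sets
with the preimage of `X` under this collapse, and preimages commute with all Boolean operations.
Since `s_α` is injective, the preimage of a single `ξ < α` is the infinite set `s_α[I_ξ]`, so
distinct `X` have images with infinite symmetric difference.
-/

noncomputable section

open Set
open scoped Ordinal

/-- The first uncountable ordinal `ω₁`. -/
def omega1 : Ordinal := (Cardinal.aleph 1).ord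

/-- `{s_α : α < ω₁}` is a coherent family: each `s_α` is injective on `ω·α`
(the set of ordinals `< ω·α`) and `s_α` agrees with `s_β` on `ω·β` except at
finitely many points, for all `β < α < ω₁`. -/
def IsCoherentFamily (s : Ordinal → Ordinal → ℕ) : Prop :=
  ∀ α < omega1,
    Set.InjOn (s α) (Set.Iio (Ordinal.omega0 * α)) ∧
    ∀ β < α, {γ : Ordinal | γ < Ordinal.omega0 * β ∧ s α γ ≠ s β γ}.Finite

open scoped Classical

/-- `A =* B`: the symmetric difference of `A, B ⊆ ℕ` is finite, i.e. `[A] = [B]`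
in `𝒫(ℕ)/Fin`. -/
def EqStar (A B : Set ℕ) : Prop := ((A \ B) ∪ (B \ A)).Finite

/-- `U_X = ⋃_{ξ ∈ X} I_ξ` where `I_ξ = [ω·ξ, ω·(ξ+1))`. -/
def USet (X : Set Ordinal) : Set Ordinal :=
  ⋃ ξ ∈ X, Set.Ico (Ordinal.omega0 * ξ) (Ordinal.omega0 * ξ + Ordinal.omega0)

/-- `α(X)`: the least ordinal `α` such that `U_X ⊆ ω·α`, i.e. `ξ < α` for all `ξ ∈ X`. -/
def alphaOf (X : Set Ordinal) : Ordinal := sInf {α : Ordinal | ∀ ξ ∈ X, ξ < α}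

/-- The map `h`: on a countable `X`, `h(U_X) = [s_{α(X)}[U_X]]`; on a cocountable `X`,
`h(U_X)` is the complement of `h(U_{ω₁ \ X})` (here given by representatives). -/
def hmap (s : Ordinal → Ordinal → ℕ) (X : Set Ordinal) : Set ℕ :=
  if X.Countable then s (alphaOf X) '' USet X
  else (s (alphaOf (Set.Iio omega1 \ X)) '' USet (Set.Iio omega1 \ X))ᶜ

open Filter Function Ordinal Cardinal

lemma countable_Iio_iff_lt_omega1 {α : Ordinal} : (Iio α).Countable ↔ α < omega1 := by
  rw [← le_aleph0_iff_set_countable, Cardinal.mk_Iio_ordinal, lift_le_aleph0, ← lt_aleph_one_iff,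
    omega1, lt_ord]

lemma not_countable_Iio_omega1 : ¬ (Iio omega1).Countable :=
  fun h => (countable_Iio_iff_lt_omega1.1 h).false

lemma succ_lt_omega1 {ξ : Ordinal} (hξ : ξ < omega1) : Order.succ ξ < omega1 := by
  rw [← countable_Iio_iff_lt_omega1, Order.Iio_succ, ← Iio_insert]
  exact (countable_Iio_iff_lt_omega1.2 hξ).insert _

lemma exists_lt_omega1_subset_Iio {S : Set Ordinal} (hS : S.Countable) (hS₁ : S ⊆ Iio omega1) :
    ∃ α < omega1, S ⊆ Iio α := by
  have := hS.to_subtype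
  refine ⟨⨆ ξ : S, Order.succ (ξ : Ordinal), ?_, fun ξ hξ => ?_⟩
  · have hsucc := fun ξ : S => succ_lt_omega1 (hS₁ ξ.2)
    rw [omega1, ord_aleph] at hsucc ⊢
    exact iSup_lt_omega_one hsucc
  · exact (Order.lt_succ ξ).trans_le (le_ciSup Ordinal.bddAbove_of_small (⟨ξ, hξ⟩ : S))

lemma eqStar_iff_eventuallyEq {A B : Set ℕ} : EqStar A B ↔ A =ᶠ[cofinite] B := by
  rw [eventuallyEq_set, eventually_cofinite, EqStar]
  congr!
  ext n
  simp only [mem_union, Set.mem_sdiff, mem_ofPred_eq]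
  tauto

lemma image_eventuallyEq_image_of_finite {α β : Type*} {f g : α → β} {A : Set α}
    (h : {x ∈ A | f x ≠ g x}.Finite) : f '' A =ᶠ[cofinite] g '' A := by
  rw [eventuallyEq_set, eventually_cofinite]
  refine ((h.image f).union (h.image g)).subset fun n hn => ?_
  by_contra hbad
  refine hn ⟨fun ⟨x, hx, hfx⟩ => ⟨x, hx, ?_⟩, fun ⟨x, hx, hgx⟩ => ⟨x, hx, ?_⟩⟩
  · by_contra hgx
    exact hbad (Or.inl ⟨x, ⟨hx, fun he => hgx (he.symm.trans hfx)⟩, hfx⟩)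
  · by_contra hfx
    exact hbad (Or.inr ⟨x, ⟨hx, fun he => hfx (he.trans hgx)⟩, hgx⟩)

lemma IsCoherentFamily.image_eventuallyEq {s : Ordinal → Ordinal → ℕ} (hs : IsCoherentFamily s)
    {α β : Ordinal} {A : Set Ordinal} (hα : α < omega1) (hβα : β ≤ α)
    (hA : A ⊆ Iio (ω * β)) : s β '' A =ᶠ[cofinite] s α '' A := by
  rcases hβα.eq_or_lt with rfl | hβα
  · rfl
  · refine (image_eventuallyEq_image_of_finite (((hs α hα).2 β hβα).subset ?_)).symm
    exact fun γ ⟨hγ, hne⟩ => ⟨hA hγ, hne⟩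

lemma div_omega0_eq_iff {x ξ : Ordinal} : x / ω = ξ ↔ x ∈ Ico (ω * ξ) (ω * ξ + ω) := by
  rw [div_eq_iff omega0_ne_zero, mul_add_one, mem_Ico]

lemma USet_eq_preimage_div (X : Set Ordinal) : USet X = (· / ω) ⁻¹' X := by
  ext x
  simp only [USet, mem_iUnion, ← div_omega0_eq_iff, exists_prop, exists_eq_right', mem_preimage]

lemma USet_subset_Iio_mul {X : Set Ordinal} {α : Ordinal} (hX : X ⊆ Iio α) :
    USet X ⊆ Iio (ω * α) := by
  intro x hx
  rw [USet_eq_preimage_div] at hx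
  exact (lt_mul_iff_div_lt omega0_ne_zero).2 (hX hx)

lemma USet_singleton_infinite (ξ : Ordinal) : (USet {ξ}).Infinite := by
  rw [USet_eq_preimage_div]
  refine infinite_of_injective_forall_mem (f := fun n : ℕ => ω * ξ + n) ?_ fun n => ?_
  · intro m n h
    exact_mod_cast add_left_cancel h
  · simp [mul_add_div _ omega0_ne_zero, div_eq_zero_of_lt (natCast_lt_omega0 n)]

def blockIndex (f : Ordinal → ℕ) (α : Ordinal) (n : ℕ) : Ordinal :=
  if n ∈ f '' Iio (ω * α) then invFunOn f (Iio (ω * α)) n / ω else α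

lemma blockIndex_le (f : Ordinal → ℕ) (α : Ordinal) (n : ℕ) : blockIndex f α n ≤ α := by
  unfold blockIndex
  split_ifs with hn
  · exact ((lt_mul_iff_div_lt omega0_ne_zero).1 (invFunOn_mem hn)).le
  · exact le_rfl

lemma preimage_blockIndex_Iio_omega1 {f : Ordinal → ℕ} {α : Ordinal} (hα : α < omega1) :
    blockIndex f α ⁻¹' Iio omega1 = Set.univ :=
  eq_univ_of_forall fun n => (blockIndex_le f α n).trans_lt hα

lemma preimage_blockIndex_diff {f : Ordinal → ℕ} {α : Ordinal} (hα : α < omega1)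
    (X : Set Ordinal) : blockIndex f α ⁻¹' (Iio omega1 \ X) = (blockIndex f α ⁻¹' X)ᶜ := by
  rw [preimage_sdiff, preimage_blockIndex_Iio_omega1 hα, compl_eq_univ_sdiff]

lemma image_USet_eq_preimage_blockIndex {f : Ordinal → ℕ} {α : Ordinal} {Z : Set Ordinal}
    (hf : InjOn f (Iio (ω * α))) (hZ : Z ⊆ Iio α) : f '' USet Z = blockIndex f α ⁻¹' Z := by
  ext n
  constructor
  · rintro ⟨x, hx, rfl⟩
    have hxα : x ∈ Iio (ω * α) := USet_subset_Iio_mul hZ hx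
    rw [USet_eq_preimage_div] at hx
    rwa [mem_preimage, blockIndex, if_pos (mem_image_of_mem f hxα),
      hf.leftInvOn_invFunOn hxα]
  · intro hn
    rw [mem_preimage, blockIndex] at hn
    split_ifs at hn with him
    · refine ⟨invFunOn f (Iio (ω * α)) n, ?_, invFunOn_eq him⟩
      rwa [USet_eq_preimage_div]
    · exact absurd (hZ hn) (lt_irrefl α)

lemma not_preimage_blockIndex_eventuallyEq {f : Ordinal → ℕ} {α ξ : Ordinal}
    {X Y : Set Ordinal} (hf : InjOn f (Iio (ω * α))) (hξ : ξ < α) (hXY : ¬(ξ ∈ X ↔ ξ ∈ Y)) :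
    ¬ blockIndex f α ⁻¹' X =ᶠ[cofinite] blockIndex f α ⁻¹' Y := by
  have hξ' : {ξ} ⊆ Iio α := singleton_subset_iff.2 hξ
  have hinf : (blockIndex f α ⁻¹' {ξ}).Infinite := by
    rw [← image_USet_eq_preimage_blockIndex hf hξ']
    exact (USet_singleton_infinite ξ).image (hf.mono (USet_subset_Iio_mul hξ'))
  intro h
  refine hinf ((eventually_cofinite.1 (eventuallyEq_set.1 h)).subset fun n hn => ?_)
  rwa [mem_ofPred_eq, mem_preimage, mem_preimage, mem_singleton_iff.1 hn]

def BoundedOrCobounded (α : Ordinal) (X : Set Ordinal) : Prop :=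
  X ⊆ Iio α ∨ Iio omega1 \ X ⊆ Iio α

namespace BoundedOrCobounded

variable {α β : Ordinal} {X Y : Set Ordinal}

lemma mono (h : BoundedOrCobounded α X) (hαβ : α ≤ β) : BoundedOrCobounded β X :=
  h.imp (fun h => h.trans (Iio_subset_Iio hαβ)) (fun h => h.trans (Iio_subset_Iio hαβ))

lemma inter (hX : BoundedOrCobounded α X) (hY : BoundedOrCobounded α Y) :
    BoundedOrCobounded α (X ∩ Y) := by
  rcases hX with hX | hX
  · exact Or.inl (inter_subset_left.trans hX)
  rcases hY with hY | hY
  · exact Or.inl (inter_subset_right.trans hY)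
  · exact Or.inr (by rw [sdiff_inter]; exact union_subset hX hY)

lemma union (hX : BoundedOrCobounded α X) (hY : BoundedOrCobounded α Y) :
    BoundedOrCobounded α (X ∪ Y) := by
  rcases hX with hX | hX
  · rcases hY with hY | hY
    · exact Or.inl (union_subset hX hY)
    · exact Or.inr ((sdiff_subset_sdiff_right subset_union_right).trans hY)
  · exact Or.inr ((sdiff_subset_sdiff_right subset_union_left).trans hX)

lemma diff (hX : BoundedOrCobounded α X) : BoundedOrCobounded α (Iio omega1 \ X) := by
  rcases hX with hX | hX
  · exact Or.inr ((sdiff_sdiff_right_self _ _).symm ▸ inter_subset_right.trans hX)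
  · exact Or.inl hX

lemma subset_of_countable (h : BoundedOrCobounded α X) (hα : α < omega1) (hX : X.Countable) :
    X ⊆ Iio α :=
  h.resolve_right fun h => not_countable_Iio_omega1 <|
    (hX.union (countable_Iio_iff_lt_omega1.2 hα)).mono fun ξ hξ =>
      (em (ξ ∈ X)).imp_right fun hξX => h ⟨hξ, hξX⟩

lemma diff_subset_of_not_countable (h : BoundedOrCobounded α X) (hα : α < omega1)
    (hX : ¬ X.Countable) : Iio omega1 \ X ⊆ Iio α :=
  h.resolve_left fun h => hX ((countable_Iio_iff_lt_omega1.2 hα).mono h)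

end BoundedOrCobounded

lemma boundedOrCobounded_empty (α : Ordinal) : BoundedOrCobounded α ∅ :=
  Or.inl (empty_subset _)

lemma boundedOrCobounded_Iio_omega1 (α : Ordinal) : BoundedOrCobounded α (Iio omega1) :=
  Or.inr (by rw [sdiff_self]; exact empty_subset _)

lemma exists_boundedOrCobounded {X : Set Ordinal} (hX : X ⊆ Iio omega1)
    (hc : X.Countable ∨ (Iio omega1 \ X).Countable) :
    ∃ α < omega1, BoundedOrCobounded α X := by
  rcases hc with hc | hc
  · obtain ⟨α, hα, hXα⟩ := exists_lt_omega1_subset_Iio hc hX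
    exact ⟨α, hα, Or.inl hXα⟩
  · obtain ⟨α, hα, hXα⟩ := exists_lt_omega1_subset_Iio hc sdiff_subset
    exact ⟨α, hα, Or.inr hXα⟩

lemma alphaOf_le {Z : Set Ordinal} {α : Ordinal} (hZ : Z ⊆ Iio α) : alphaOf Z ≤ α :=
  csInf_le' hZ

lemma subset_Iio_alphaOf {Z : Set Ordinal} {α : Ordinal} (hZ : Z ⊆ Iio α) :
    Z ⊆ Iio (alphaOf Z) :=
  csInf_mem (s := {α : Ordinal | ∀ ξ ∈ Z, ξ < α}) ⟨α, hZ⟩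

lemma hmap_eventuallyEq_preimage_blockIndex {s : Ordinal → Ordinal → ℕ}
    (hs : IsCoherentFamily s) {α : Ordinal} (hα : α < omega1) {X : Set Ordinal}
    (hX : BoundedOrCobounded α X) : hmap s X =ᶠ[cofinite] blockIndex (s α) α ⁻¹' X := by
  have key : ∀ Z ⊆ Iio α, s (alphaOf Z) '' USet Z =ᶠ[cofinite] blockIndex (s α) α ⁻¹' Z := by
    intro Z hZ
    rw [← image_USet_eq_preimage_blockIndex (hs α hα).1 hZ]
    exact hs.image_eventuallyEq hα (alphaOf_le hZ) (USet_subset_Iio_mul (subset_Iio_alphaOf hZ))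
  unfold hmap
  split_ifs with hc
  · exact key X (hX.subset_of_countable hα hc)
  · simpa [preimage_blockIndex_diff hα] using
      (key _ (hX.diff_subset_of_not_countable hα hc)).compl

lemma eq_of_hmap_eventuallyEq {s : Ordinal → Ordinal → ℕ} (hs : IsCoherentFamily s)
    {X Y : Set Ordinal} (hX : X ⊆ Iio omega1) (hY : Y ⊆ Iio omega1)
    (hXc : X.Countable ∨ (Iio omega1 \ X).Countable)
    (hYc : Y.Countable ∨ (Iio omega1 \ Y).Countable) (h : hmap s X =ᶠ[cofinite] hmap s Y) :
    X = Y := by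
  by_contra hne
  obtain ⟨ξ, hξ⟩ : ∃ ξ, ¬(ξ ∈ X ↔ ξ ∈ Y) := by simpa [Set.ext_iff] using hne
  have hξ₁ : ξ < omega1 := union_subset hX hY (by tauto)
  obtain ⟨αX, hαX, hXα⟩ := exists_boundedOrCobounded hX hXc
  obtain ⟨αY, hαY, hYα⟩ := exists_boundedOrCobounded hY hYc
  set α := max (max αX αY) (Order.succ ξ)
  have hα : α < omega1 := max_lt (max_lt hαX hαY) (succ_lt_omega1 hξ₁)
  have hXα' : BoundedOrCobounded α X := hXα.mono ((le_max_left αX αY).trans (le_max_left _ _))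
  have hYα' : BoundedOrCobounded α Y := hYα.mono ((le_max_right αX αY).trans (le_max_left _ _))
  refine not_preimage_blockIndex_eventuallyEq (hs α hα).1
    ((Order.lt_succ ξ).trans_le (le_max_right _ _)) hξ ?_
  exact ((hmap_eventuallyEq_preimage_blockIndex hs hα hXα').symm.trans h).trans
    (hmap_eventuallyEq_preimage_blockIndex hs hα hYα')

/-- for a coherent family `{s_α}`, the map `h` on the Boolean algebra `𝒜`
of sets `U_X` (`X ⊆ ω₁` countable or cocountable) is a well-defined injective Boolean
homomorphism into `𝒫(ℕ)/Fin`: it preserves `∩`, `∪`, complement, `⊥` and `⊤` modulo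
finite sets, and distinct elements of `𝒜` have `≠*` images. -/
theorem stmt9 (s : Ordinal → Ordinal → ℕ) (hs : IsCoherentFamily s) :
    ∀ X Y : Set Ordinal, X ⊆ Set.Iio omega1 → Y ⊆ Set.Iio omega1 →
      (X.Countable ∨ (Set.Iio omega1 \ X).Countable) →
      (Y.Countable ∨ (Set.Iio omega1 \ Y).Countable) →
      EqStar (hmap s (X ∩ Y)) (hmap s X ∩ hmap s Y) ∧
      EqStar (hmap s (X ∪ Y)) (hmap s X ∪ hmap s Y) ∧
      EqStar (hmap s (Set.Iio omega1 \ X)) ((hmap s X)ᶜ) ∧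
      EqStar (hmap s (∅ : Set Ordinal)) (∅ : Set ℕ) ∧
      EqStar (hmap s (Set.Iio omega1)) (Set.univ : Set ℕ) ∧
      (X ≠ Y → ¬ EqStar (hmap s X) (hmap s Y)) := by
  intro X Y hX hY hXc hYc
  obtain ⟨αX, hαX, hXα⟩ := exists_boundedOrCobounded hX hXc
  obtain ⟨αY, hαY, hYα⟩ := exists_boundedOrCobounded hY hYc
  have hα : max αX αY < omega1 := max_lt hαX hαY
  replace hXα := hXα.mono (le_max_left αX αY)
  replace hYα := hYα.mono (le_max_right αX αY)
  have h := fun Z (hZ : BoundedOrCobounded (max αX αY) Z) =>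
    hmap_eventuallyEq_preimage_blockIndex hs hα hZ
  simp only [eqStar_iff_eventuallyEq]
  refine ⟨(h _ (hXα.inter hYα)).trans ((h X hXα).inter (h Y hYα)).symm,
    (h _ (hXα.union hYα)).trans ((h X hXα).union (h Y hYα)).symm,
    (h _ hXα.diff).trans ?_, h _ (boundedOrCobounded_empty _),
    (h _ (boundedOrCobounded_Iio_omega1 _)).trans
      (preimage_blockIndex_Iio_omega1 hα).eventuallyEq,
    fun hne heq => hne (eq_of_hmap_eventuallyEq hs hX hY hXc hYc heq)⟩
  · rw [preimage_blockIndex_diff hα]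
    exact (h X hXα).compl.symm
end
end

section
/- Assume 𝔟 > ω₁ (the bounding number exceeds ω₁). Then for every almost disjoint family {A_ξ : ξ < ω₁} of infinite subsets of ℕ there exists a ⊆*-increasing sequence (V_α)_{α<ω₁} of subsets of ℕ such that A_ξ ⊆* V_α for all ξ < α < ω₁, and A_ξ ∩ V_α is finite for all α ≤ ξ < ω₁. -/
noncomputable section

/-- The bounding number `𝔟`: the least cardinality of a family of functions
`ℕ → ℕ` unbounded in the order of eventual pointwise domination. -/
def bInvariant : Cardinal :=
  sInf { c : Cardinal | ∃ F : Set (ℕ → ℕ), c = Cardinal.mk ↥F ∧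
      ¬ ∃ g : ℕ → ℕ, ∀ f ∈ F, ∀ᶠ n in Filter.atTop, f n ≤ g n }

/-!
Van Douwen's separation: a countable family `(Bₙ)` can be almost separated from any family of
fewer than `𝔟` sets, each almost disjoint from every `Bₙ`. Indeed, if `g` eventually dominates,
for each `C` of that family, the function `n ↦ max (Bₙ ∩ C)`, then `V = ⋃ₙ {k ∈ Bₙ | g n < k}`
works. As `𝔟 > ω₁`, the tower is then built by transfinite recursion: `V_α` separates the countable
family `{A_ξ | ξ < α} ∪ {V_β | β < α}` from `{A_ξ | α ≤ ξ < ω₁}`, which is possible because each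
earlier `V_β` already meets every `A_ξ` with `ξ ≥ β` in a finite set.
-/

open Cardinal Set Filter

universe u v

theorem exists_eventually_le_of_mk_lt_bInvariant {ι : Type v} (hι : #ι < lift.{v} bInvariant)
    (f : ι → ℕ → ℕ) : ∃ g : ℕ → ℕ, ∀ i, ∀ᶠ n in atTop, f i n ≤ g n := by
  by_contra hf
  have hle : bInvariant ≤ #(range f) := by
    refine csInf_le' ⟨range f, rfl, ?_⟩
    rintro ⟨g, hg⟩
    exact hf ⟨g, fun i => hg _ (mem_range_self i)⟩
  have hrange : lift.{v} #(range f) ≤ lift.{0} #ι := mk_range_le_lift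
  rw [lift_uzero] at hrange
  exact ((lift_le.2 hle).trans hrange).not_gt hι

theorem exists_separating_nat_of_mk_lt_bInvariant {ι : Type v}
    (hι : #ι < lift.{v} bInvariant) (B : ℕ → Set ℕ) (C : ι → Set ℕ)
    (h : ∀ n i, (B n ∩ C i).Finite) :
    ∃ V : Set ℕ, (∀ n, (B n \ V).Finite) ∧ ∀ i, (C i ∩ V).Finite := by
  obtain ⟨g, hg⟩ :=
    exists_eventually_le_of_mk_lt_bInvariant hι fun i n => (h n i).toFinset.sup id
  refine ⟨⋃ n, B n ∩ Ioi (g n), fun n => (finite_Iic (g n)).subset ?_, fun i => ?_⟩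
  · rintro k ⟨hkB, hkV⟩
    rw [mem_Iic]
    by_contra! hk
    exact hkV (mem_iUnion.2 ⟨n, hkB, hk⟩)
  · obtain ⟨N, hN⟩ := eventually_atTop.1 (hg i)
    refine ((finite_lt_nat N).biUnion fun n _ => h n i).subset ?_
    rintro k ⟨hkC, hkV⟩
    obtain ⟨n, hkB, hgk⟩ := mem_iUnion.1 hkV
    refine mem_iUnion₂.2 ⟨n, show n < N from ?_, hkB, hkC⟩
    by_contra! hNn
    have hkg : k ≤ g n :=
      (Finset.le_sup (f := id) ((h n i).mem_toFinset.2 ⟨hkB, hkC⟩)).trans (hN n hNn)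
    exact hkg.not_gt hgk

theorem exists_separating_of_mk_lt_bInvariant {κ : Type*} [Countable κ] {ι : Type v}
    (hι : #ι < lift.{v} bInvariant) (B : κ → Set ℕ) (C : ι → Set ℕ)
    (h : ∀ j i, (B j ∩ C i).Finite) :
    ∃ V : Set ℕ, (∀ j, (B j \ V).Finite) ∧ ∀ i, (C i ∩ V).Finite := by
  cases isEmpty_or_nonempty κ
  · exact ⟨∅, isEmptyElim, fun i => by simp⟩
  · obtain ⟨e, he⟩ := exists_surjective_nat κ
    obtain ⟨V, hB, hC⟩ :=
      exists_separating_nat_of_mk_lt_bInvariant hι (B ∘ e) C fun n => h (e n)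
    exact ⟨V, he.forall.2 hB, hC⟩

theorem countable_Iio_of_lt_omega1 {α : Ordinal.{u}} (hα : α < omega1) : (Iio α).Countable := by
  rwa [← le_aleph0_iff_set_countable, mk_Iio_ordinal, lift_le_aleph0, ← lt_aleph_one_iff,
    ← lt_ord]

theorem mk_Iio_omega1 : #(Iio omega1.{u}) = ℵ₁ := by
  rw [mk_Iio_ordinal, omega1, card_ord, lift_eq_aleph_one]

def IsTowerStage (A : Ordinal.{u} → Set ℕ) (α : Ordinal.{u}) (W : ∀ β < α, Set ℕ) (V : Set ℕ) :
    Prop :=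
  (∀ β (hβ : β < α), (W β hβ \ V).Finite) ∧ (∀ ξ < α, (A ξ \ V).Finite) ∧
    ∀ ξ ∈ Ico α omega1, (A ξ ∩ V).Finite

theorem exists_isTowerStage (hb : ℵ₁ < bInvariant) {A : Ordinal.{u} → Set ℕ}
    (hAD : ∀ ξ < omega1, ∀ η < omega1, ξ ≠ η → (A ξ ∩ A η).Finite)
    {α : Ordinal.{u}} (hα : α < omega1) (W : ∀ β < α, Set ℕ)
    (hW : ∀ β (hβ : β < α), ∀ ξ ∈ Ico α omega1, (A ξ ∩ W β hβ).Finite) :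
    ∃ V, IsTowerStage A α W V := by
  have : Countable (Iio α) := (countable_Iio_of_lt_omega1 hα).to_subtype
  have hC : #(Ico α omega1) < lift.{u + 1} bInvariant := by
    refine (mk_le_mk_of_subset Ico_subset_Iio_self).trans_lt ?_
    rwa [mk_Iio_omega1, aleph_one_lt_lift]
  set B : Iio α ⊕ Iio α → Set ℕ := Sum.elim (fun β => A β) fun β => W β β.2
  have hBC : ∀ j (ξ : Ico α omega1), (B j ∩ A ξ).Finite := by
    rintro (⟨β, hβ⟩ | ⟨β, hβ⟩) ⟨ξ, hξ⟩
    · exact hAD β (hβ.trans hα) ξ hξ.2 (hβ.trans_le hξ.1).ne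
    · exact inter_comm (A ξ) _ ▸ hW β hβ ξ hξ
  obtain ⟨V, hBV, hCV⟩ := exists_separating_of_mk_lt_bInvariant hC B _ hBC
  exact ⟨V, fun β hβ => hBV (.inr ⟨β, hβ⟩), fun ξ hξ => hBV (.inl ⟨ξ, hξ⟩),
    fun ξ hξ => hCV ⟨ξ, hξ⟩⟩

def tower (A : Ordinal.{u} → Set ℕ) : Ordinal.{u} → Set ℕ :=
  Ordinal.lt_wf.fix fun α W => Classical.epsilon (IsTowerStage A α W)

theorem tower_eq (A : Ordinal.{u} → Set ℕ) (α : Ordinal.{u}) :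
    tower A α = Classical.epsilon (IsTowerStage A α fun β _ => tower A β) :=
  Ordinal.lt_wf.fix_eq _ α

theorem isTowerStage_tower (hb : ℵ₁ < bInvariant) {A : Ordinal.{u} → Set ℕ}
    (hAD : ∀ ξ < omega1, ∀ η < omega1, ξ ≠ η → (A ξ ∩ A η).Finite)
    {α : Ordinal.{u}} (hα : α < omega1) :
    IsTowerStage A α (fun β _ => tower A β) (tower A α) := by
  induction α using WellFoundedLT.induction with
  | _ α ih =>
    rw [tower_eq A α]
    exact Classical.epsilon_spec <| exists_isTowerStage hb hAD hα _ fun β hβ ξ hξ =>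
      (ih β hβ (hβ.trans hα)).2.2 ξ ⟨hβ.le.trans hξ.1, hξ.2⟩

theorem stmt10_general (hb : Cardinal.aleph 1 < bInvariant)
    (A : Ordinal → Set ℕ)
    (hAD : ∀ ξ < omega1, ∀ η < omega1, ξ ≠ η → (A ξ ∩ A η).Finite) :
    ∃ V : Ordinal → Set ℕ,
      (∀ α < omega1, ∀ β < omega1, α < β → (V α \ V β).Finite) ∧
      (∀ ξ α : Ordinal, ξ < α → α < omega1 → (A ξ \ V α).Finite) ∧
      (∀ α ξ : Ordinal, α ≤ ξ → ξ < omega1 → (A ξ ∩ V α).Finite) := by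
  have stage := fun α (hα : α < omega1) => isTowerStage_tower hb hAD hα
  exact ⟨tower A, fun α _ β hβ hαβ => (stage β hβ).1 α hαβ,
    fun ξ α hξα hα => (stage α hα).2.1 ξ hξα,
    fun α ξ hαξ hξ => (stage α (hαξ.trans_lt hξ)).2.2 ξ ⟨hαξ, hξ⟩⟩

/-- if `𝔟 > ω₁`, then every almost disjoint family `{A_ξ : ξ < ω₁}` of
infinite subsets of `ℕ` admits a `⊆*`-increasing sequence `(V_α)_{α<ω₁}` with
`A_ξ ⊆* V_α` for `ξ < α` and `A_ξ ∩ V_α` finite for `α ≤ ξ < ω₁`. -/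
theorem stmt10 (hb : Cardinal.aleph 1 < bInvariant)
    (A : Ordinal → Set ℕ)
    (hAinf : ∀ ξ < omega1, (A ξ).Infinite)
    (hAD : ∀ ξ < omega1, ∀ η < omega1, ξ ≠ η → (A ξ ∩ A η).Finite) :
    ∃ V : Ordinal → Set ℕ,
      (∀ α < omega1, ∀ β < omega1, α < β → (V α \ V β).Finite) ∧
      (∀ ξ α : Ordinal, ξ < α → α < omega1 → (A ξ \ V α).Finite) ∧
      (∀ α ξ : Ordinal, α ≤ ξ → ξ < omega1 → (A ξ ∩ V α).Finite) :=
  stmt10_general hb A hAD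
end
end

section
/- Let κ be an uncountable cardinal, {A_ξ : ξ < κ} an almost disjoint family of infinite subsets of ℕ, and S : ℓ∞^c(κ) → C(ℕ*) a bounded linear operator with S(1_{{ξ}}) = 1_{[A_ξ]} for all ξ < κ. Define r = inf over countable C ⊆ κ of sup{|S(f)(x)| : f ∈ ℓ∞^c(κ \ C), ‖f‖ = 1, x ∈ ⋃_{ξ∈κ\C}[A_ξ]}, and R = inf over countable C ⊆ κ of sup{|S(f)(x)| : f ∈ ℓ∞^c(κ \ C), ‖f‖ = 1, x ∉ ⋃_{ξ<κ}[A_ξ]}. Then R ≥ r. -/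
set_option synthInstance.maxHeartbeats 400000
set_option maxHeartbeats 1000000

noncomputable section

open Set Filter
open scoped ENNReal

open Function Topology

/-!
Fix a countable `C` and `δ > 0`. Choose recursively norm-one `f n` with pairwise disjoint
countable supports off `C`, distinct `ξ n` and points `x n ∈ [A (ξ n)]` with
`|S (f n) (x n)| > r - δ`. Rosenthal's lemma, applied to `w n I`, the norm of `S · (x n)` on the
functions supported in `⋃ m ∈ I, supp (f m)`, yields an infinite `N` with `w n (N \ {n}) ≤ δ` for
`n ∈ N`. The glued function `F = ∑ m ∈ N, f m` then has `|S F (x n)| ≥ r - 2δ` for `n ∈ N`, hence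
so has `S F` at a limit point `z` of `(x n)_{n ∈ N}` in `ℕ*`; by almost disjointness `z` lies in no
`[A ξ]`, so the supremum defining `R` at `C` is at least `r - 2δ`.
-/

section Rosenthal

variable {w : ℕ → Set ℕ → ℝ} {ε : ℝ}

theorem exists_infinite_subset_forall_exists_disjoint
    (hw : ∀ N : Set ℕ, N.Infinite → ∃ n ∈ N, ε < w n (N \ {n})) {T : Set ℕ} (hT : T.Infinite) :
    ∃ T' ⊆ T, T'.Infinite ∧ ∀ n ∈ T', ∃ E ⊆ T, Disjoint E T' ∧ ε < w n E := by
  -- split `T` into the infinitely many infinite rows `range (e (j, ·))`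
  set e : ℕ × ℕ → ℕ := fun p => hT.natEmbedding _ (Nat.pairEquiv p)
  have he : Injective e := Subtype.val_injective.comp
    ((hT.natEmbedding _).injective.comp Nat.pairEquiv.injective)
  have heT : ∀ p, e p ∈ T := fun p => (hT.natEmbedding _ _).2
  have hrow : ∀ j, (range fun i => e (j, i)).Infinite := fun j =>
    infinite_range_of_injective (he.comp (Prod.mk_right_injective j))
  choose n hn hlt using fun j => hw _ (hrow j)
  choose i hi using hn
  have hn_inj : Injective n := fun j j' h => by
    simpa using congrArg Prod.fst (he ((hi j).trans (h.trans (hi j').symm)))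
  refine ⟨range n, range_subset_iff.2 fun j => hi j ▸ heT _, infinite_range_of_injective hn_inj,
    ?_⟩
  rintro _ ⟨j, rfl⟩
  refine ⟨_, sdiff_subset.trans (range_subset_iff.2 fun i => heT _), ?_, hlt j⟩
  rw [disjoint_left]
  rintro _ ⟨⟨i', rfl⟩, hne⟩ ⟨j', hj'⟩
  obtain rfl : j' = j := congrArg Prod.fst (he ((hi j').trans hj'))
  exact hne hj'.symm

theorem exists_infinite_forall_exists_disjoint_le
    (hw : ∀ N : Set ℕ, N.Infinite → ∃ n ∈ N, ε < w n (N \ {n})) (h0 : ∀ n, 0 ≤ w n ∅)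
    (hsup : ∀ n I J, Disjoint I J → w n I + w n J ≤ w n (I ∪ J)) (k : ℕ) :
    ∃ T : Set ℕ, T.Infinite ∧ ∀ n ∈ T, ∃ G, Disjoint G T ∧ k * ε ≤ w n G := by
  induction k with
  | zero => exact ⟨univ, infinite_univ, fun n _ => ⟨∅, empty_disjoint _, by simpa using h0 n⟩⟩
  | succ k ih =>
    obtain ⟨T, hT, hG⟩ := ih
    obtain ⟨T', hT'T, hT', hE⟩ := exists_infinite_subset_forall_exists_disjoint hw hT
    refine ⟨T', hT', fun n hn => ?_⟩
    obtain ⟨G, hGT, hG⟩ := hG n (hT'T hn)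
    obtain ⟨E, hET, hET', hE⟩ := hE n hn
    refine ⟨G ∪ E, disjoint_union_left.2 ⟨hGT.mono_right hT'T, hET'⟩, ?_⟩
    have := hsup n G E (hGT.mono_right hET)
    push_cast
    linarith

/-- Rosenthal's disjointification lemma, for superadditive set functions. -/
theorem exists_infinite_forall_diff_singleton_le (hε : 0 < ε) {M : ℝ} (h0 : ∀ n, 0 ≤ w n ∅)
    (hM : ∀ n I, w n I ≤ M) (hsup : ∀ n I J, Disjoint I J → w n I + w n J ≤ w n (I ∪ J)) :
    ∃ N : Set ℕ, N.Infinite ∧ ∀ n ∈ N, w n (N \ {n}) ≤ ε := by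
  by_contra! hw
  obtain ⟨k, hk⟩ := exists_nat_gt (M / ε)
  obtain ⟨T, hT, hG⟩ := exists_infinite_forall_exists_disjoint_le hw h0 hsup k
  obtain ⟨n, hn⟩ := hT.nonempty
  obtain ⟨G, -, hG⟩ := hG n hn
  rw [div_lt_iff₀ hε] at hk
  linarith [hM n G]

end Rosenthal

namespace NStar

theorem finite_notMem (x : NStar) {E : Set ℕ} (hE : E.Finite) : E ∉ x.1 := fun h =>
  let ⟨a, _, ha⟩ := Ultrafilter.eq_pure_of_finite_mem hE h
  x.2 a ha

instance inst_s12 : CompactSpace NStar := by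
  refine isCompact_iff_compactSpace.mp
    (IsClosed.isCompact (s := {u : Ultrafilter ℕ | ∀ n, u ≠ pure n}) ?_)
  have : {u : Ultrafilter ℕ | ∀ n, u ≠ pure n} = ⋂ n, {u | {n}ᶜ ∈ u} := by
    ext u
    simp only [mem_ofPred_eq, mem_iInter, Ultrafilter.compl_mem_iff_notMem]
    refine forall_congr' fun n => not_congr ⟨fun h => h ▸ Ultrafilter.mem_pure.2 rfl, fun h => ?_⟩
    obtain ⟨a, ha, hu⟩ := Ultrafilter.eq_pure_of_finite_mem (finite_singleton n) h
    rwa [mem_singleton_iff.1 ha] at hu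
  rw [this]
  exact isClosed_iInter fun n => ultrafilter_isClosed_basic _

variable {κ : Type*} {A : κ → Set ℕ}

theorem eq_of_mem_clopenOf (hAD : ∀ ξ η, ξ ≠ η → (A ξ ∩ A η).Finite) {x : NStar} {ξ η : κ}
    (hξ : x ∈ clopenOf (A ξ)) (hη : x ∈ clopenOf (A η)) : ξ = η := by
  by_contra h
  exact x.finite_notMem (hAD ξ η h) (inter_mem hξ hη)

theorem exists_forall_notMem_clopenOf_le_abs (hAD : ∀ ξ η, ξ ≠ η → (A ξ ∩ A η).Finite)
    {ξ : ℕ → κ} (hξ : Injective ξ) {x : ℕ → NStar} (hx : ∀ n, x n ∈ clopenOf (A (ξ n)))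
    {g : NStar → ℝ} (hg : Continuous g) {N : Set ℕ} (hN : N.Infinite) {c : ℝ}
    (hc : ∀ n ∈ N, c ≤ |g (x n)|) : ∃ z, (∀ η, z ∉ clopenOf (A η)) ∧ c ≤ |g z| := by
  have := hN.cofinite_inf_principal_neBot
  set V := Ultrafilter.of (cofinite ⊓ 𝓟 N)
  have hV : (V : Filter ℕ) ≤ cofinite ⊓ 𝓟 N := Ultrafilter.of_le _
  have hz : Tendsto x V (𝓝 (V.map x).lim) := (V.map x).le_nhds_lim
  refine ⟨_, fun η hzη => ?_, ge_of_tendsto ((hg.tendsto _).comp hz).abs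
    (mem_of_superset (hV.trans inf_le_right (mem_principal_self N)) hc)⟩
  -- only finitely many `x n` lie in `[A η]`, as the `ξ n` are distinct
  have hfin : {n | x n ∈ clopenOf (A η)}.Finite :=
    ((finite_singleton η).preimage hξ.injOn).subset fun n hn => eq_of_mem_clopenOf hAD (hx n) hn
  exact V.compl_mem_iff_notMem.1 (hV.trans inf_le_left hfin.compl_mem_cofinite)
    (hz ((isClopen_clopenOf _).isOpen.mem_nhds hzη))

end NStar

section Glue

variable {κ : Type*}

def glue (f : ℕ → κ → ℝ) (I : Set ℕ) (i : κ) : ℝ := ∑' m, I.indicator (fun m => f m i) m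

variable {f : ℕ → κ → ℝ}

theorem glue_apply_of_forall_ne {m : ℕ} {i : κ} (h : ∀ m' ≠ m, f m' i = 0) (I : Set ℕ) :
    glue f I i = I.indicator (fun m => f m i) m :=
  tsum_eq_single m fun m' hm' => by simp [h m' hm']

theorem exists_forall_ne_eq_zero (hf : Pairwise (Disjoint on fun m => support (f m))) (i : κ) :
    ∃ m, ∀ m' ≠ m, f m' i = 0 := by
  by_cases h : ∃ m, f m i ≠ 0
  · obtain ⟨m, hm⟩ := h
    exact ⟨m, fun m' hm' => by_contra fun h' => disjoint_left.1 (hf hm') h' hm⟩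
  · push Not at h
    exact ⟨0, fun m' _ => h m'⟩

theorem abs_glue_le_one (hf : Pairwise (Disjoint on fun m => support (f m)))
    (hf1 : ∀ m i, |f m i| ≤ 1) (I : Set ℕ) (i : κ) : |glue f I i| ≤ 1 := by
  obtain ⟨m, hm⟩ := exists_forall_ne_eq_zero hf i
  rw [glue_apply_of_forall_ne hm]
  by_cases hmI : m ∈ I
  · rw [indicator_of_mem hmI]
    exact hf1 m i
  · simp [indicator_of_notMem hmI]

theorem support_glue_subset (hf : Pairwise (Disjoint on fun m => support (f m)))
    (I : Set ℕ) : support (glue f I) ⊆ ⋃ m ∈ I, support (f m) := by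
  intro i hi
  obtain ⟨m, hm⟩ := exists_forall_ne_eq_zero hf i
  rw [mem_support, glue_apply_of_forall_ne hm, indicator_apply_ne_zero] at hi
  exact mem_biUnion hi.1 hi.2

theorem abs_le_abs_glue (hf : Pairwise (Disjoint on fun m => support (f m)))
    {I : Set ℕ} {n : ℕ} (hn : n ∈ I) (i : κ) : |f n i| ≤ |glue f I i| := by
  obtain ⟨m, hm⟩ := exists_forall_ne_eq_zero hf i
  rw [glue_apply_of_forall_ne hm]
  rcases eq_or_ne n m with rfl | hnm
  · rw [indicator_of_mem hn]
  · simp [hm n hnm]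

theorem glue_sub_of_mem (hf : Pairwise (Disjoint on fun m => support (f m)))
    {I : Set ℕ} {n : ℕ} (hn : n ∈ I) : glue f I - f n = glue f (I \ {n}) := by
  ext i
  obtain ⟨m, hm⟩ := exists_forall_ne_eq_zero hf i
  rw [Pi.sub_apply, glue_apply_of_forall_ne hm, glue_apply_of_forall_ne hm]
  rcases eq_or_ne n m with rfl | hnm
  · simp [hn]
  · rw [hm n hnm, sub_zero]
    by_cases hmI : m ∈ I
    · rw [indicator_of_mem hmI, indicator_of_mem (show m ∈ I \ {n} from ⟨hmI, hnm.symm⟩)]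
    · rw [indicator_of_notMem hmI, indicator_of_notMem fun h => hmI h.1]

end Glue

section linfc

variable {κ : Type*}

theorem linfc.norm_le_one_of_forall {g : linfc κ} (h : ∀ i, |(g : LinfK κ) i| ≤ 1) : ‖g‖ ≤ 1 :=
  lp.norm_le_of_forall_le zero_le_one h

theorem linfc.abs_apply_le_norm (g : linfc κ) (i : κ) : |(g : LinfK κ) i| ≤ ‖g‖ :=
  (Real.norm_eq_abs _).symm.trans_le (lp.norm_apply_le_norm ENNReal.top_ne_zero (g : LinfK κ) i)

theorem linfc.support_zero : support ⇑((0 : linfc κ) : LinfK κ) = ∅ :=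
  Function.support_zero

theorem linfc.support_neg (g : linfc κ) :
    support ⇑((-g : linfc κ) : LinfK κ) = support ⇑(g : LinfK κ) :=
  Function.support_neg _

theorem linfc.norm_add_le_one {g h : linfc κ} (hg : ‖g‖ ≤ 1) (hh : ‖h‖ ≤ 1)
    (hgh : Disjoint (support ⇑(g : LinfK κ)) (support ⇑(h : LinfK κ))) : ‖g + h‖ ≤ 1 := by
  refine linfc.norm_le_one_of_forall fun i => ?_
  change |(g : LinfK κ) i + (h : LinfK κ) i| ≤ 1
  by_cases hi : (g : LinfK κ) i = 0
  · rw [hi, zero_add]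
    exact (linfc.abs_apply_le_norm h i).trans hh
  · rw [notMem_support.1 (disjoint_left.1 hgh hi), add_zero]
    exact (linfc.abs_apply_le_norm g i).trans hg

end linfc

section NormOn

variable {κ : Type*}

def normOn (φ : linfc κ →L[ℝ] ℝ) (D : Set κ) : ℝ :=
  sSup {v | ∃ h : linfc κ, ‖h‖ ≤ 1 ∧ support ⇑(h : LinfK κ) ⊆ D ∧ v = |φ h|}

variable (φ : linfc κ →L[ℝ] ℝ) {D D' : Set κ}

theorem abs_le_normOn {h : linfc κ} (hh : ‖h‖ ≤ 1) (hD : support ⇑(h : LinfK κ) ⊆ D) :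
    |φ h| ≤ normOn φ D := by
  refine le_csSup ⟨‖φ‖, ?_⟩ ⟨h, hh, hD, rfl⟩
  rintro _ ⟨g, hg, -, rfl⟩
  exact (φ.le_opNorm g).trans (mul_le_of_le_one_right (norm_nonneg φ) hg)

theorem normOn_nonneg : 0 ≤ normOn φ D :=
  (abs_nonneg _).trans (abs_le_normOn φ (h := 0) (by simp) (linfc.support_zero ▸ empty_subset D))

theorem normOn_le_opNorm : normOn φ D ≤ ‖φ‖ := by
  refine csSup_le ⟨_, 0, by simp, linfc.support_zero ▸ empty_subset _, rfl⟩ ?_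
  rintro _ ⟨g, hg, -, rfl⟩
  exact (φ.le_opNorm g).trans (mul_le_of_le_one_right (norm_nonneg φ) hg)

theorem normOn_add_normOn_le (hD : Disjoint D D') :
    normOn φ D + normOn φ D' ≤ normOn φ (D ∪ D') := by
  have key : ∀ g h : linfc κ, ‖g‖ ≤ 1 → support ⇑(g : LinfK κ) ⊆ D → ‖h‖ ≤ 1 →
      support ⇑(h : LinfK κ) ⊆ D' → |φ g| + |φ h| ≤ normOn φ (D ∪ D') := by
    intro g h hg hgD hh hhD
    have hgh := hD.mono hgD hhD
    -- `|a| + |b|` is `|a + b|` or `|a - b|`, and `g ± h` lie in the unit ball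
    have hadd : |φ g + φ h| ≤ normOn φ (D ∪ D') := by
      rw [← map_add]
      exact abs_le_normOn φ (linfc.norm_add_le_one hg hh hgh)
        ((support_add _ _).trans (union_subset_union hgD hhD))
    have hsub : |φ g + -φ h| ≤ normOn φ (D ∪ D') := by
      rw [← map_neg, ← map_add]
      refine abs_le_normOn φ (linfc.norm_add_le_one hg (by rwa [norm_neg]) ?_)
        ((support_add _ _).trans (union_subset_union hgD ?_))
      · rwa [linfc.support_neg]
      · rwa [linfc.support_neg]
    rcases abs_cases (φ g) with ⟨ha, -⟩ | ⟨ha, -⟩ <;>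
      rcases abs_cases (φ h) with ⟨hb, -⟩ | ⟨hb, -⟩ <;>
      linarith [le_abs_self (φ g + φ h), neg_abs_le (φ g + φ h), le_abs_self (φ g + -φ h),
        neg_abs_le (φ g + -φ h)]
  refine le_sub_iff_add_le.1 (csSup_le ⟨_, 0, by simp, linfc.support_zero ▸ empty_subset _, rfl⟩ ?_)
  rintro _ ⟨g, hg, hgD, rfl⟩
  refine le_sub_comm.1 (csSup_le ⟨_, 0, by simp, linfc.support_zero ▸ empty_subset _, rfl⟩ ?_)
  rintro _ ⟨h, hh, hhD, rfl⟩
  linarith [key g h hg hgD hh hhD]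

end NormOn

section Gluing

variable {κ : Type*}

theorem exists_glue_linfc {f : ℕ → linfc κ}
    (hf : Pairwise (Disjoint on fun m => support ⇑(f m : LinfK κ))) (hf1 : ∀ m, ‖f m‖ ≤ 1)
    (N : Set ℕ) :
    ∃ F : linfc κ, support ⇑(F : LinfK κ) ⊆ ⋃ m ∈ N, support ⇑(f m : LinfK κ) ∧ ‖F‖ ≤ 1 ∧
      ∀ n ∈ N, ‖f n‖ ≤ ‖F‖ ∧ ‖F - f n‖ ≤ 1 ∧
        support ⇑((F - f n : linfc κ) : LinfK κ) ⊆ ⋃ m ∈ N \ {n}, support ⇑(f m : LinfK κ) := by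
  set g : ℕ → κ → ℝ := fun m => ⇑(f m : LinfK κ)
  have hg1 : ∀ m i, |g m i| ≤ 1 := fun m i => (linfc.abs_apply_le_norm (f m) i).trans (hf1 m)
  have hcount : (support (glue g N)).Countable :=
    (N.to_countable.biUnion fun m _ => (f m).2).mono (support_glue_subset hf N)
  let F : linfc κ :=
    ⟨⟨glue g N, memℓp_infty ⟨1, by rintro _ ⟨i, rfl⟩; exact abs_glue_le_one hf hg1 N i⟩⟩, hcount⟩
  have hsub : ∀ n ∈ N, ⇑((F - f n : linfc κ) : LinfK κ) = glue g (N \ {n}) := fun n hn =>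
    glue_sub_of_mem hf hn
  refine ⟨F, support_glue_subset hf N, linfc.norm_le_one_of_forall (abs_glue_le_one hf hg1 N),
    fun n hn => ⟨?_, linfc.norm_le_one_of_forall fun i => ?_, hsub n hn ▸ support_glue_subset hf _⟩⟩
  · exact lp.norm_le_of_forall_le (norm_nonneg _) fun i =>
      (abs_le_abs_glue hf hn i).trans (linfc.abs_apply_le_norm F i)
  · rw [hsub n hn]
    exact abs_glue_le_one hf hg1 _ i

theorem exists_seq_pairwise_disjoint {α β : Type*} (s : β → Set α) (hs : ∀ b, (s b).Countable)
    (P : β → Prop) {C : Set α} (hC : C.Countable)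
    (h : ∀ D : Set α, D.Countable → ∃ b, P b ∧ Disjoint (s b) D) :
    ∃ b : ℕ → β, (∀ n, P (b n) ∧ Disjoint (s (b n)) C) ∧
      Pairwise (Disjoint on fun n => s (b n)) := by
  have : Std.Symm fun b b' => Disjoint (s b) (s b') := ⟨fun _ _ h => h.symm⟩
  refine exists_seq_of_forall_finset_exists' (fun b => P b ∧ Disjoint (s b) C)
    (fun b b' => Disjoint (s b) (s b')) fun F _ => ?_
  obtain ⟨b, hb, hbD⟩ := h (C ∪ ⋃ b ∈ F, s b) (hC.union (F.countable_toSet.biUnion fun b _ => hs b))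
  exact ⟨b, ⟨hb, hbD.mono_right subset_union_left⟩, fun b' hb' =>
    (hbD.mono_right ((subset_biUnion_of_mem (u := s) hb').trans subset_union_right)).symm⟩

theorem exists_glue_le_abs {X : Type*} [TopologicalSpace X]
    (S : linfc κ →L[ℝ] BoundedContinuousFunction X ℝ)
    {f : ℕ → linfc κ} (hf : Pairwise (Disjoint on fun m => support ⇑(f m : LinfK κ)))
    (hf1 : ∀ m, ‖f m‖ = 1) {x : ℕ → X} {c δ : ℝ} (hδ : 0 < δ) (hc : ∀ n, c < |S (f n) (x n)|) :
    ∃ F : linfc κ, support ⇑(F : LinfK κ) ⊆ ⋃ m, support ⇑(f m : LinfK κ) ∧ ‖F‖ = 1 ∧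
      ∃ N : Set ℕ, N.Infinite ∧ ∀ n ∈ N, c - δ ≤ |S F (x n)| := by
  set φ : ℕ → linfc κ →L[ℝ] ℝ := fun n => (BoundedContinuousFunction.evalCLM ℝ (x n)).comp S
  have hφ : ∀ n, ‖φ n‖ ≤ ‖S‖ := fun n => ContinuousLinearMap.opNorm_le_bound _ (norm_nonneg S)
    fun h => (BoundedContinuousFunction.norm_coe_le_norm (S h) (x n)).trans (S.le_opNorm h)
  obtain ⟨N, hN, hNδ⟩ := exists_infinite_forall_diff_singleton_le
    (w := fun n I => normOn (φ n) (⋃ m ∈ I, support ⇑(f m : LinfK κ))) hδ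
    (fun n => normOn_nonneg _) (fun n _ => (normOn_le_opNorm _).trans (hφ n)) fun n I J hIJ => by
      rw [biUnion_union]
      exact normOn_add_normOn_le _ (disjoint_iUnion₂_left.2 fun m hm =>
        disjoint_iUnion₂_right.2 fun m' hm' => hf (hIJ.ne_of_mem hm hm'))
  obtain ⟨F, hFf, hF1, hFn⟩ := exists_glue_linfc hf (fun m => (hf1 m).le) N
  obtain ⟨n₀, hn₀⟩ := hN.nonempty
  refine ⟨F, hFf.trans (iUnion₂_subset_iUnion _ _),
    le_antisymm hF1 ((hf1 n₀).symm.trans_le (hFn n₀ hn₀).1), N, hN, fun n hn => ?_⟩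
  obtain ⟨-, hFn1, hFnN⟩ := hFn n hn
  -- `F` is `f n` plus a function supported on the other `f m`, on which `S · (x n)` is small
  have hrest : |S (F - f n) (x n)| ≤ δ := (abs_le_normOn (φ n) hFn1 hFnN).trans (hNδ n hn)
  have hsplit : S F (x n) = S (f n) (x n) + S (F - f n) (x n) := by simp
  rw [hsplit]
  linarith [abs_sub_abs_le_abs_add (S (f n) (x n)) (S (F - f n) (x n)), hc n]

end Gluing

section Values

variable {κ : Type*} (A : κ → Set ℕ) (S : linfc κ →L[ℝ] BoundedContinuousFunction NStar ℝ)

/-- `r` is the infimum of `sSup (insideValues A S C)`, and `R` that of `sSup (outsideValues A S C)`,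
over countable `C`. -/
def insideValues (C : Set κ) : Set ℝ :=
  { v : ℝ | ∃ f : ↥(linfc κ),
      (∀ ξ : κ, ((f : LinfK κ) : κ → ℝ) ξ ≠ 0 → ξ ∉ C) ∧ ‖f‖ = 1 ∧
      ∃ x : NStar, (∃ ξ : κ, ξ ∉ C ∧ x ∈ clopenOf (A ξ)) ∧ v = |S f x| }

def outsideValues (C : Set κ) : Set ℝ :=
  { v : ℝ | ∃ f : ↥(linfc κ),
      (∀ ξ : κ, ((f : LinfK κ) : κ → ℝ) ξ ≠ 0 → ξ ∉ C) ∧ ‖f‖ = 1 ∧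
      ∃ x : NStar, (∀ ξ : κ, x ∉ clopenOf (A ξ)) ∧ v = |S f x| }

variable {A S}

theorem sSup_insideValues_nonneg (C : Set κ) : 0 ≤ sSup (insideValues A S C) :=
  Real.sSup_nonneg fun _ ⟨_, _, _, _, _, hv⟩ => hv ▸ abs_nonneg _

theorem sSup_outsideValues_nonneg (C : Set κ) : 0 ≤ sSup (outsideValues A S C) :=
  Real.sSup_nonneg fun _ ⟨_, _, _, _, _, hv⟩ => hv ▸ abs_nonneg _

theorem bddAbove_outsideValues (C : Set κ) : BddAbove (outsideValues A S C) := by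
  refine ⟨‖S‖, ?_⟩
  rintro _ ⟨f, -, hf1, x, -, rfl⟩
  calc |S f x| ≤ ‖S f‖ := BoundedContinuousFunction.norm_coe_le_norm (S f) x
    _ ≤ ‖S‖ := by simpa [hf1] using S.le_opNorm f

theorem exists_seq_of_forall_exists_mem_insideValues {C : Set κ} (hC : C.Countable) {c : ℝ}
    (hc : ∀ D : Set κ, D.Countable → ∃ v ∈ insideValues A S D, c < v) :
    ∃ (f : ℕ → linfc κ) (ξ : ℕ → κ) (x : ℕ → NStar),
      Pairwise (Disjoint on fun n => support ⇑(f n : LinfK κ)) ∧ Injective ξ ∧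
      ∀ n, Disjoint (support ⇑(f n : LinfK κ)) C ∧ ‖f n‖ = 1 ∧ x n ∈ clopenOf (A (ξ n)) ∧
        c < |S (f n) (x n)| := by
  obtain ⟨p, hp, hdisj⟩ := exists_seq_pairwise_disjoint
    (fun p : linfc κ × κ × NStar => support ⇑(p.1 : LinfK κ) ∪ {p.2.1})
    (fun p => p.1.2.union (countable_singleton _))
    (fun p => ‖p.1‖ = 1 ∧ p.2.2 ∈ clopenOf (A p.2.1) ∧ c < |S p.1 p.2.2|) hC fun D hD => by
      obtain ⟨_, ⟨f, hfD, hf1, x, ⟨ξ, hξD, hx⟩, rfl⟩, hlt⟩ := hc D hD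
      exact ⟨(f, ξ, x), ⟨hf1, hx, hlt⟩,
        disjoint_union_left.2 ⟨disjoint_left.2 hfD, disjoint_singleton_left.2 hξD⟩⟩
  refine ⟨fun n => (p n).1, fun n => (p n).2.1, fun n => (p n).2.2,
    fun m n hmn => (hdisj hmn).mono subset_union_left subset_union_left, fun m n h => ?_,
    fun n => ⟨(hp n).2.mono_left subset_union_left, (hp n).1⟩⟩
  by_contra hmn
  exact disjoint_left.1 (hdisj hmn) (mem_union_right _ rfl) (mem_union_right _ h)

theorem sInf_le_sSup_outsideValues (hAD : ∀ ξ η, ξ ≠ η → (A ξ ∩ A η).Finite) {C : Set κ}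
    (hC : C.Countable) :
    sInf {t : ℝ | ∃ C : Set κ, C.Countable ∧ t = sSup (insideValues A S C)} ≤
      sSup (outsideValues A S C) := by
  set r := sInf {t : ℝ | ∃ C : Set κ, C.Countable ∧ t = sSup (insideValues A S C)}
  rcases le_or_gt r 0 with hr | hr
  · exact hr.trans (sSup_outsideValues_nonneg C)
  refine le_of_forall_sub_le fun ε hε => ?_
  have hc : ∀ D : Set κ, D.Countable → ∃ v ∈ insideValues A S D, r - ε / 2 < v := by
    intro D hD
    have hrD : r ≤ sSup (insideValues A S D) :=
      csInf_le ⟨0, fun _ ⟨D, _, ht⟩ => ht ▸ sSup_insideValues_nonneg D⟩ ⟨D, hD, rfl⟩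
    -- `sSup ∅ = 0 < r`
    have hne : (insideValues A S D).Nonempty := nonempty_iff_ne_empty.2 fun h => by
      rw [h, Real.sSup_empty] at hrD
      linarith
    exact exists_lt_of_lt_csSup hne (by linarith)
  obtain ⟨f, ξ, x, hdisj, hξ, hfx⟩ := exists_seq_of_forall_exists_mem_insideValues hC hc
  obtain ⟨F, hFf, hF1, N, hN, hFN⟩ := exists_glue_le_abs S hdisj (fun n => (hfx n).2.1)
    (half_pos hε) fun n => (hfx n).2.2.2
  obtain ⟨z, hz, hFz⟩ := NStar.exists_forall_notMem_clopenOf_le_abs hAD hξ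
    (fun n => (hfx n).2.2.1) (S F).continuous hN hFN
  have hFC : ∀ i, ((F : LinfK κ) : κ → ℝ) i ≠ 0 → i ∉ C := fun i hi =>
    have ⟨m, hm⟩ := mem_iUnion.1 (hFf hi)
    disjoint_left.1 (hfx m).1 hm
  calc r - ε = r - ε / 2 - ε / 2 := by ring
    _ ≤ |S F z| := hFz
    _ ≤ sSup (outsideValues A S C) := le_csSup (bddAbove_outsideValues C) ⟨F, hFC, hF1, z, hz, rfl⟩

end Values

theorem stmt12_general {κ : Type*} (A : κ → Set ℕ)
    (hAD : ∀ ξ η, ξ ≠ η → (A ξ ∩ A η).Finite)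
    (S : ↥(linfc κ) →L[ℝ] BoundedContinuousFunction NStar ℝ) :
    sInf { t : ℝ | ∃ C : Set κ, C.Countable ∧
        t = sSup { v : ℝ | ∃ f : ↥(linfc κ),
              (∀ ξ : κ, ((f : LinfK κ) : κ → ℝ) ξ ≠ 0 → ξ ∉ C) ∧ ‖f‖ = 1 ∧
              ∃ x : NStar, (∃ ξ : κ, ξ ∉ C ∧ x ∈ clopenOf (A ξ)) ∧ v = |S f x| } } ≤
    sInf { t : ℝ | ∃ C : Set κ, C.Countable ∧
        t = sSup { v : ℝ | ∃ f : ↥(linfc κ),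
              (∀ ξ : κ, ((f : LinfK κ) : κ → ℝ) ξ ≠ 0 → ξ ∉ C) ∧ ‖f‖ = 1 ∧
              ∃ x : NStar, (∀ ξ : κ, x ∉ clopenOf (A ξ)) ∧ v = |S f x| } } := by
  refine le_csInf ⟨_, ∅, countable_empty, rfl⟩ ?_
  rintro _ ⟨C, hC, rfl⟩
  exact sInf_le_sSup_outsideValues hAD hC

/-- for a bounded operator `S : ℓ∞^c(κ) → C(ℕ*)`, `κ` uncountable, with
`S(1_{{ξ}}) = 1_{[A_ξ]}`, the quantity `r` (inf over countable `C` of sup of `|S(f)(x)|`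
over norm-one `f` supported off `C` and `x` in some `[A_ξ]`, `ξ ∉ C`) is at most the
quantity `R` (same but with `x` outside all `[A_ξ]`). -/
theorem stmt12 {κ : Type*} [Uncountable κ] (A : κ → Set ℕ)
    (hinj : Function.Injective A)
    (hAinf : ∀ ξ, (A ξ).Infinite)
    (hAD : ∀ ξ η, ξ ≠ η → (A ξ ∩ A η).Finite)
    (S : ↥(linfc κ) →L[ℝ] BoundedContinuousFunction NStar ℝ)
    (hS : ∀ ξ, S (unitVecC ξ) = indBCF (A ξ)) :
    sInf { t : ℝ | ∃ C : Set κ, C.Countable ∧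
        t = sSup { v : ℝ | ∃ f : ↥(linfc κ),
              (∀ ξ : κ, ((f : LinfK κ) : κ → ℝ) ξ ≠ 0 → ξ ∉ C) ∧ ‖f‖ = 1 ∧
              ∃ x : NStar, (∃ ξ : κ, ξ ∉ C ∧ x ∈ clopenOf (A ξ)) ∧ v = |S f x| } } ≤
    sInf { t : ℝ | ∃ C : Set κ, C.Countable ∧
        t = sSup { v : ℝ | ∃ f : ↥(linfc κ),
              (∀ ξ : κ, ((f : LinfK κ) : κ → ℝ) ξ ≠ 0 → ξ ∉ C) ∧ ‖f‖ = 1 ∧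
              ∃ x : NStar, (∀ ξ : κ, x ∉ clopenOf (A ξ)) ∧ v = |S f x| } } :=
  stmt12_general A hAD S
end
end

section
/- Let X be a finite-dimensional subspace of a Banach space E, and suppose S : X → ℓ∞^h is an isomorphism onto with ‖S‖·‖S⁻¹‖ < ρ. Then there exists a linear projection P : E → X onto X with ‖P‖ ≤ ρ. -/
set_option synthInstance.maxHeartbeats 400000
set_option maxHeartbeats 1000000

noncomputable section

open scoped ENNReal

/-- `ℓ∞^h`: `ℝ^h` with the maximum norm. -/
abbrev LinfFin (h : ℕ) : Type := PiLp ∞ (fun _ : Fin h => ℝ)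

/-- if `X` is a finite-dimensional subspace of a Banach space `E` and
`S : X → ℓ∞^h` is an isomorphism onto with `‖S‖·‖S⁻¹‖ < ρ`, then there is a projection
`P : E → X` onto `X` with `‖P‖ ≤ ρ`. -/
theorem stmt15 {E : Type*} [NormedAddCommGroup E] [NormedSpace ℝ E] [CompleteSpace E]
    (X : Submodule ℝ E) (hX : FiniteDimensional ℝ X) (h : ℕ) (ρ : ℝ)
    (S : X ≃L[ℝ] LinfFin h)
    (hS : ‖S.toContinuousLinearMap‖ * ‖S.symm.toContinuousLinearMap‖ < ρ) :
    ∃ P : E →L[ℝ] E, (∀ x ∈ X, P x = x) ∧ (∀ y : E, P y ∈ X) ∧ ‖P‖ ≤ ρ := by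
  classical
  -- coordinate functionals on `X`
  set f : Fin h → (X →L[ℝ] ℝ) := fun j =>
    (ContinuousLinearMap.proj j).comp
      (((PiLp.equivₗᵢ (𝕜 := ℝ) (fun _ : Fin h => ℝ)).toContinuousLinearEquiv.toContinuousLinearMap).comp
        S.toContinuousLinearMap) with hf
  have hfnorm : ∀ j, ‖f j‖ ≤ ‖S.toContinuousLinearMap‖ := by
    intro j
    refine ContinuousLinearMap.opNorm_le_bound _ (ContinuousLinearMap.opNorm_nonneg _) (fun x => ?_)
    have h1 : ‖f j x‖ ≤ ‖S x‖ := by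
      have : f j x = (S x) j := rfl
      rw [this]
      have : ‖S x‖ = ⨆ i, ‖(S x) i‖ := PiLp.norm_eq_ciSup (S x)
      rw [this]
      exact le_ciSup (f := fun i => ‖(S x) i‖) (Set.Finite.bddAbove (Set.finite_range _)) j
    exact h1.trans (S.toContinuousLinearMap.le_opNorm x)
  -- Hahn-Banach extensions
  have hext : ∀ j, ∃ g : E →L[ℝ] ℝ, (∀ x : X, g x = f j x) ∧ ‖g‖ = ‖f j‖ := fun j =>
    exists_extension_norm_eq X (f j)
  choose ψ hψ hψnorm using hext
  -- the map T : E → ℓ∞^h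
  set T : E →L[ℝ] LinfFin h :=
    ((PiLp.equivₗᵢ (𝕜 := ℝ) (fun _ : Fin h => ℝ)).symm.toContinuousLinearEquiv.toContinuousLinearMap).comp
      (ContinuousLinearMap.pi ψ) with hT
  have hTapply : ∀ (y : E) (j : Fin h), T y j = ψ j y := fun y j => rfl
  have hTnorm : ‖T‖ ≤ ‖S.toContinuousLinearMap‖ := by
    refine ContinuousLinearMap.opNorm_le_bound _ (ContinuousLinearMap.opNorm_nonneg _) (fun y => ?_)
    have : ‖T y‖ = ⨆ j, ‖T y j‖ := PiLp.norm_eq_ciSup (T y)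
    rw [this]
    rcases Nat.eq_zero_or_pos h with hz | hpos
    · subst hz
      simp [Real.iSup_of_isEmpty]
      positivity
    · have : Nonempty (Fin h) := ⟨⟨0, hpos⟩⟩
      refine ciSup_le (fun j => ?_)
      rw [hTapply]
      calc ‖ψ j y‖ ≤ ‖ψ j‖ * ‖y‖ := (ψ j).le_opNorm y
        _ ≤ ‖S.toContinuousLinearMap‖ * ‖y‖ := by
            rw [hψnorm]
            exact mul_le_mul_of_nonneg_right (hfnorm j) (norm_nonneg y)
  have hTX : ∀ x : X, T (x : E) = S x := by
    intro x
    ext j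
    rw [hTapply, hψ]
    rfl
  -- the projection
  set P : E →L[ℝ] E := X.subtypeL.comp (S.symm.toContinuousLinearMap.comp T) with hP
  refine ⟨P, ?_, ?_, ?_⟩
  · intro x hx
    have : P x = ((S.symm (T x) : X) : E) := rfl
    rw [this, hTX ⟨x, hx⟩, S.symm_apply_apply]
  · intro y
    exact ((S.symm (T y)) : X).2
  · calc ‖P‖ ≤ ‖X.subtypeL‖ * ‖S.symm.toContinuousLinearMap.comp T‖ :=
        ContinuousLinearMap.opNorm_comp_le _ _
      _ ≤ 1 * (‖S.symm.toContinuousLinearMap‖ * ‖T‖) := by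
          refine mul_le_mul ?_ (ContinuousLinearMap.opNorm_comp_le _ _) (ContinuousLinearMap.opNorm_nonneg _)
            zero_le_one
          refine ContinuousLinearMap.opNorm_le_bound _ zero_le_one (fun x => ?_)
          simp
      _ = ‖S.symm.toContinuousLinearMap‖ * ‖T‖ := one_mul _
      _ ≤ ‖S.symm.toContinuousLinearMap‖ * ‖S.toContinuousLinearMap‖ :=
          mul_le_mul_of_nonneg_left hTnorm (ContinuousLinearMap.opNorm_nonneg _)
      _ = ‖S.toContinuousLinearMap‖ * ‖S.symm.toContinuousLinearMap‖ := mul_comm _ _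
      _ ≤ ρ := le_of_lt hS
end
end
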